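/- arXiv:2108.12593 — 10 statements merged into one kernel-verified Lean document; each statement's English description precedes it below -/
import Mathlib

section
/- Let p be a prime power (p = q^t with q prime, t ≥ 1), let m be a positive integer, and let N and a be the natural numbers with (p - 1) * N = p^(m+1) - 1 and (p - 1) * a = p^m - 1. Then there exists an array O : Fin (p^(m+1)) → Fin N → Fin p such that for any two distinct rows i ≠ j, the number of columns c with O i c = O j c equals a. -/
open Projectivization Module
open scoped LinearAlgebra.Projectivization

section aux

variable {K V : Type*} [Field K] [AddCommGroup V] [Module K V]

lemma aux_mk_smul (b : Kˣ) (d : ℙ K V) :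
    Projectivization.mk K ((b : K) • d.rep)
      (smul_ne_zero b.ne_zero d.rep_nonzero) = d := by
  conv_rhs => rw [← d.mk_rep]
  exact (mk_eq_mk_iff K _ _ _ d.rep_nonzero).2 ⟨b, rfl⟩

lemma aux_mk_congr {v w : V} (hv : v ≠ 0) (hw : w ≠ 0) (h : v = w) :
    Projectivization.mk K v hv = Projectivization.mk K w hw := by
  subst h
  rfl

lemma aux_card_proj (W : Submodule K V) :
    Nat.card {c : ℙ K V // c.rep ∈ W} * Nat.card Kˣ =
      Nat.card {v : V // v ∈ W ∧ v ≠ 0} := by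
  rw [← Nat.card_prod]
  apply Nat.card_congr
  refine Equiv.ofBijective
    (fun x => ⟨(x.2 : K) • x.1.1.rep, W.smul_mem _ x.1.2,
      smul_ne_zero (Units.ne_zero _) x.1.1.rep_nonzero⟩) ⟨?_, ?_⟩
  · rintro ⟨⟨c, hc⟩, a⟩ ⟨⟨c', hc'⟩, a'⟩ h
    simp only [Subtype.mk.injEq] at h
    have hcc : c = c' := by
      rw [← aux_mk_smul a c, ← aux_mk_smul a' c']
      exact aux_mk_congr _ _ h
    subst hcc
    have ha : (a : K) = a' := by
      have h2 : ((a : K) - a') • c.rep = 0 := by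
        rw [sub_smul, h, sub_self]
      rcases smul_eq_zero.1 h2 with h3 | h3
      · exact sub_eq_zero.1 h3
      · exact absurd h3 c.rep_nonzero
    simp [Prod.ext_iff, Units.ext ha]
  · rintro ⟨v, hvW, hv⟩
    obtain ⟨u, hu⟩ := exists_smul_eq_mk_rep K v hv
    refine ⟨⟨⟨Projectivization.mk K v hv, ?_⟩, u⁻¹⟩, ?_⟩
    · rw [← hu]; exact W.smul_mem _ hvW
    · simp only [Subtype.mk.injEq]
      rw [← hu]
      simp [Units.smul_def, smul_smul]

end aux

lemma aux_count (K V : Type*) [Field K] [Finite K] [AddCommGroup V] [Module K V]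
    [Finite V] (W : Submodule K V) :
    Nat.card {c : ℙ K V // c.rep ∈ W} * (Nat.card K - 1) =
      Nat.card K ^ finrank K W - 1 := by
  classical
  cases nonempty_fintype K
  have : Fintype W := Fintype.ofFinite W
  rw [← Nat.card_units, aux_card_proj W]
  have e : {v : V // v ∈ W ∧ v ≠ 0} ≃ {x : W // x ≠ 0} :=
    { toFun := fun v => ⟨⟨v.1, v.2.1⟩, by
        simp only [ne_eq, Submodule.mk_eq_zero]
        exact v.2.2⟩
      invFun := fun x => ⟨x.1.1, x.1.2, by
        intro h
        exact x.2 (Subtype.ext h)⟩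
      left_inv := fun v => rfl
      right_inv := fun x => rfl }
  rw [Nat.card_congr e]
  have h1 : Nat.card {x : W // x ≠ 0} = Fintype.card W - 1 := by
    rw [Nat.card_eq_fintype_card, Fintype.card_subtype_compl, Fintype.card_subtype_eq]
  rw [h1, card_eq_pow_finrank (K := K) (V := W), Nat.card_eq_fintype_card]

noncomputable def dotL {K : Type*} [Field K] {n : ℕ} (u : Fin n → K) :
    (Fin n → K) →ₗ[K] K where
  toFun x := ∑ k, u k * x k
  map_add' x y := by simp [mul_add, Finset.sum_add_distrib]
  map_smul' c x := by simp [Finset.mul_sum, mul_left_comm]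

lemma dotL_single {K : Type*} [Field K] {n : ℕ} (u : Fin n → K) (k : Fin n) :
    dotL u (Pi.single k 1) = u k := by
  simp [dotL, Pi.single_apply, mul_ite]

lemma dotL_sub {K : Type*} [Field K] {n : ℕ} (u v : Fin n → K) (x : Fin n → K) :
    dotL (u - v) x = dotL u x - dotL v x := by
  simp [dotL, sub_mul, Finset.sum_sub_distrib]

lemma finrank_ker_dotL {K : Type*} [Field K] {n : ℕ} {u : Fin n → K} (hu : u ≠ 0) :
    finrank K (LinearMap.ker (dotL u)) = n - 1 := by
  have hV : finrank K (Fin n → K) = n := Module.finrank_fin_fun K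
  have hrk := LinearMap.finrank_range_add_finrank_ker (dotL u)
  have hne : LinearMap.range (dotL u) ≠ ⊥ := by
    intro h
    obtain ⟨k, hk⟩ := Function.ne_iff.1 hu
    have : dotL u (Pi.single k 1) = 0 := by
      have := LinearMap.mem_range_self (dotL u) (Pi.single k 1)
      rw [h, Submodule.mem_bot] at this
      exact this
    rw [dotL_single] at this
    exact hk this
  have h1 : finrank K (LinearMap.range (dotL u)) = 1 := by
    have hle : finrank K (LinearMap.range (dotL u)) ≤ 1 := by
      simpa using Submodule.finrank_le (LinearMap.range (dotL u))
    have hpos : finrank K (LinearMap.range (dotL u)) ≠ 0 := by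
      intro h
      exact hne (Submodule.finrank_eq_zero.1 h)
    omega
  rw [h1, hV] at hrk
  omega

/-- For a prime power `p = q^t` and a positive integer `m`, there is an orthogonal array
`O` in `p` symbols of dimensions `p^(m+1) × N`, where `(p-1) * N = p^(m+1) - 1`, such that
any two distinct rows agree in exactly `a` columns, where `(p-1) * a = p^m - 1`. -/
theorem stmt_1 (q t p m N a : ℕ) (hq : q.Prime) (ht : 1 ≤ t) (hp : p = q ^ t)
    (hm : 1 ≤ m) (hN : (p - 1) * N = p ^ (m + 1) - 1) (ha : (p - 1) * a = p ^ m - 1) :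
    ∃ O : Fin (p ^ (m + 1)) → Fin N → Fin p,
      ∀ i j : Fin (p ^ (m + 1)), i ≠ j →
        {c : Fin N | O i c = O j c}.ncard = a := by
  classical
  have hqf : Fact q.Prime := ⟨hq⟩
  have ht0 : t ≠ 0 := by omega
  have hp2 : 2 ≤ p := by
    rw [hp]
    exact Nat.one_lt_pow ht0 hq.one_lt
  set F := GaloisField q t with hFdef
  have hcardF : Nat.card F = p := by
    rw [hp]; exact GaloisField.card q t ht0
  have instF : Fintype F := Fintype.ofFinite F
  have hcF : Fintype.card F = p := by rw [← Nat.card_eq_fintype_card, hcardF]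
  set V := (Fin (m + 1) → F) with hVdef
  have hcV : Fintype.card V = p ^ (m + 1) := by
    have h : Fintype.card (Fin (m + 1) → F) = p ^ (m + 1) := by
      rw [Fintype.card_fun, hcF, Fintype.card_fin]
    exact h
  let eV : Fin (p ^ (m + 1)) ≃ V := (Fintype.equivFinOfCardEq hcV).symm
  let eF : F ≃ Fin p := Fintype.equivFinOfCardEq hcF
  -- cardinality of the projectivization
  have htop := aux_count F V ⊤
  rw [Nat.card_congr (Equiv.subtypeUnivEquiv (fun c => Submodule.mem_top)),
    finrank_top, Module.finrank_fin_fun, hcardF] at htop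
  have hPN : Nat.card (ℙ F V) = N := by
    apply Nat.eq_of_mul_eq_mul_left (show 0 < p - 1 by omega)
    rw [hN, ← htop, mul_comm]
  have instP : Finite (ℙ F V) := Quotient.finite _
  let eC : Fin N ≃ ℙ F V := (Finite.equivFinOfCardEq hPN).symm
  refine ⟨fun i c => eF ((dotL (eV i)) ((eC c).rep)), ?_⟩
  intro i j hij
  set u := eV i - eV j with hudef
  have hu : u ≠ 0 := sub_ne_zero.2 (fun h => hij (eV.injective h))
  have hcnt := aux_count F V (LinearMap.ker (dotL u))
  rw [finrank_ker_dotL hu, hcardF, Nat.add_sub_cancel] at hcnt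
  have hcnt' : Nat.card {c : ℙ F V // c.rep ∈ LinearMap.ker (dotL u)} = a := by
    apply Nat.eq_of_mul_eq_mul_left (show 0 < p - 1 by omega)
    rw [ha, ← hcnt, mul_comm]
  rw [← Nat.card_coe_set_eq, ← hcnt']
  apply Nat.card_congr
  refine Equiv.subtypeEquiv eC (fun c => ?_)
  simp only [Set.mem_setOf_eq, LinearMap.mem_ker, eF.injective.eq_iff]
  rw [← sub_eq_zero, ← dotL_sub]
end

section
/- Let p be a prime power (p = q^t with q prime, t ≥ 1) and let k be a positive integer dividing p - 1. Then there exists a balanced generalized weighing matrix BGW(p+1, p, p-1) over the cyclic group ℤ_k. -/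
/-- `W` is a balanced generalized weighing matrix `BGW(v, k, lam)` over the cyclic group
`ℤ_n`: each row has exactly `k` entries different from `none`, and for every pair of
distinct rows `i, j` and every `g ∈ ZMod n`, the number of columns `c` with
`W i c = some a`, `W j c = some b` and `a - b = g` equals `lam / n`. -/
def IsBGW (v k lam n : ℕ) (W : Fin v → Fin v → Option (ZMod n)) : Prop :=
  (∀ i, {c : Fin v | W i c ≠ none}.ncard = k) ∧
  ∀ i j : Fin v, i ≠ j → ∀ g : ZMod n,
    {c : Fin v | ∃ a b : ZMod n, W i c = some a ∧ W j c = some b ∧ a - b = g}.ncard = lam / n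

/-!
Index rows and columns by the projective line `F ∪ {∞}` over the field `F` with `p` elements.
Since `Fˣ` is cyclic of order `p - 1`, there is a surjective homomorphism `χ : Fˣ → ℤ_k`, all of
whose fibres have `(p - 1) / k` elements; extend it by `χ 0 = 0`. Put `W r y = χ (r - y)` for
finite `r ≠ y`, `0` when `r` or `y` is `∞`, and leave the diagonal empty. For finite rows `x ≠ z`,
`χ (x - c) - χ (z - c) = χ ((x - c) / (z - c))`, and the Möbius map `c ↦ (x - c) / (z - c)` sends
`F \ {x, z}` bijectively onto `F \ {0, 1}`; the column `∞` supplies the missing value `1`, at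
which `χ` vanishes. A finite row against the row `∞` reduces to the translation `c ↦ x - c`.
-/

open Set Function

theorem Set.ncard_setOf_option {α : Type*} [Finite α] (P : Option α → Prop) [DecidablePred P] :
    {y | P y}.ncard = {a | P (some a)}.ncard + if P none then 1 else 0 := by
  by_cases h : P none
  · have hset : {y | P y} = insert none (some '' {a | P (some a)}) := by
      ext (_ | a) <;> simp [h]
    rw [hset, ncard_insert_of_notMem (by simp), (Option.some_injective α).injOn.ncard_image,
      if_pos h]
  · have hset : {y | P y} = some '' {a | P (some a)} := by
      ext (_ | a) <;> simp [h]
    rw [hset, (Option.some_injective α).injOn.ncard_image, if_neg h, add_zero]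

theorem Set.ncard_setOf_ne_and_add {α : Type*} [Finite α] (a : α) (P : α → Prop)
    [DecidablePred P] :
    {x | x ≠ a ∧ P x}.ncard + (if P a then 1 else 0) = {x | P x}.ncard := by
  have hset : {x | x ≠ a ∧ P x} = {x | P x} \ {a} := by
    ext x; simp [and_comm]
  rw [hset]
  split_ifs with h
  · exact ncard_sdiff_singleton_add_one h
  · rw [sdiff_singleton_eq_self (s := {x | P x}) h, add_zero]

theorem MonoidHom.card_preimage_singleton_of_surjective {G H : Type*} [Group G] [Group H]
    [Finite G] {f : G →* H} (hf : Surjective f) (h : H) :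
    Nat.card (f ⁻¹' {h}) = Nat.card G / Nat.card H := by
  have : Finite H := .of_surjective f hf
  rw [Nat.card_congr (f.fiberEquivKerOfSurjective hf h), ← f.ker.card_mul_index,
    Subgroup.index_ker, f.range_eq_top.mpr hf, Subgroup.card_top,
    Nat.mul_div_cancel _ Nat.card_pos]

theorem IsCyclic.exists_surjective_monoidHom_zmod {G : Type*} [Group G] [IsCyclic G] {k : ℕ}
    (hk : k ∣ Nat.card G) : ∃ f : G →* Multiplicative (ZMod k), Surjective f :=
  ⟨(ZMod.castHom hk (ZMod k)).toAddMonoidHom.toMultiplicative.comp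
      (zmodCyclicMulEquiv inferInstance).symm.toMonoidHom,
    (ZMod.castHom_surjective hk).comp (zmodCyclicMulEquiv inferInstance).symm.surjective⟩

open scoped Classical in
theorem exists_log_zmod (F : Type*) [Field F] [Finite F] {k : ℕ} (hk : k ∣ Nat.card F - 1) :
    ∃ χ : F → ZMod k, (∀ a b, a ≠ 0 → b ≠ 0 → χ (a * b) = χ a + χ b) ∧
      ∀ g, {d | d ≠ 0 ∧ χ d = g}.ncard = (Nat.card F - 1) / k := by
  obtain ⟨f, hf⟩ := IsCyclic.exists_surjective_monoidHom_zmod (G := Fˣ) (Nat.card_units F ▸ hk)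
  refine ⟨fun x => if hx : x = 0 then 0 else (f (Units.mk0 x hx)).toAdd, ?_, fun g => ?_⟩
  · intro a b ha hb
    simp [ha, hb, Units.mk0_mul]
  · have hset : {d | d ≠ 0 ∧ (if hd : d = 0 then 0 else (f (Units.mk0 d hd)).toAdd) = g}
        = Units.val '' (f ⁻¹' {Multiplicative.ofAdd g}) := by
      ext d
      constructor
      · rintro ⟨hd, rfl⟩
        exact ⟨Units.mk0 d hd, by simp [hd], rfl⟩
      · rintro ⟨u, hu, rfl⟩
        simp_all
    rw [hset, Units.val_injective.injOn.ncard_image, ← Nat.card_coe_set_eq,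
      f.card_preimage_singleton_of_surjective hf, Nat.card_units,
      Nat.card_congr Multiplicative.toAdd, Nat.card_zmod]

section ProjectiveLine

variable {F G : Type*} [Field F]

theorem ncard_fiber_sub_left [Finite F] (χ : F → G) (x : F) (g : G) :
    {c | c ≠ x ∧ χ (x - c) = g}.ncard = {d | d ≠ 0 ∧ χ d = g}.ncard := by
  have hset : {c | c ≠ x ∧ χ (x - c) = g} = (Equiv.subLeft x) ⁻¹' {d | d ≠ 0 ∧ χ d = g} := by
    ext c; simp [sub_ne_zero, eq_comm]
  rw [hset, ncard_preimage_of_injective_subset_range (Equiv.injective _) (by simp)]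

theorem bijOn_sub_div_sub {x z : F} (hxz : x ≠ z) :
    BijOn (fun c => (x - c) / (z - c)) {c | c ≠ x ∧ c ≠ z} {d | d ≠ 0 ∧ d ≠ 1} := by
  have hzx : z - x ≠ 0 := sub_ne_zero.mpr hxz.symm
  refine InvOn.bijOn (f' := fun d => (x - d * z) / (1 - d)) ⟨?_, ?_⟩ ?_ ?_
  · rintro c ⟨-, hcz⟩
    have hzc : z - c ≠ 0 := sub_ne_zero.mpr hcz.symm
    have hnum : x - (x - c) / (z - c) * z = c * ((z - x) / (z - c)) := by
      field_simp; ring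
    have hden : 1 - (x - c) / (z - c) = (z - x) / (z - c) := by
      field_simp; ring
    simp only
    rw [hnum, hden, mul_div_cancel_right₀ _ (div_ne_zero hzx hzc)]
  · rintro d ⟨-, hd1⟩
    have h1d : 1 - d ≠ 0 := sub_ne_zero.mpr hd1.symm
    have hnum : x - (x - d * z) / (1 - d) = d * ((z - x) / (1 - d)) := by
      field_simp; ring
    have hden : z - (x - d * z) / (1 - d) = (z - x) / (1 - d) := by
      field_simp; ring
    simp only
    rw [hnum, hden, mul_div_cancel_right₀ _ (div_ne_zero hzx h1d)]
  · rintro c ⟨hcx, hcz⟩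
    have hzc : z - c ≠ 0 := sub_ne_zero.mpr hcz.symm
    refine ⟨div_ne_zero (sub_ne_zero.mpr hcx.symm) hzc, ?_⟩
    rw [Ne, div_eq_one_iff_eq hzc, sub_left_inj]
    exact hxz
  · rintro d ⟨hd0, hd1⟩
    have h1d : 1 - d ≠ 0 := sub_ne_zero.mpr hd1.symm
    refine ⟨fun h => ?_, fun h => ?_⟩ <;> rw [div_eq_iff h1d] at h
    · have : d * (z - x) = 0 := by linear_combination -h
      exact hd0 ((mul_eq_zero.mp this).resolve_right hzx)
    · exact hxz (by linear_combination h)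

theorem ncard_fiber_sub_sub [Finite F] [AddCommGroup G] {χ : F → G}
    (hχ : ∀ a b, a ≠ 0 → b ≠ 0 → χ (a * b) = χ a + χ b) {x z : F} (hxz : x ≠ z) (g : G) :
    {c | c ≠ x ∧ c ≠ z ∧ χ (x - c) - χ (z - c) = g}.ncard =
      {d | d ≠ 0 ∧ d ≠ 1 ∧ χ d = g}.ncard := by
  have hbij := bijOn_sub_div_sub hxz
  have hset : {c | c ≠ x ∧ c ≠ z ∧ χ (x - c) - χ (z - c) = g} =
      {c | c ≠ x ∧ c ≠ z} ∩ (fun c => (x - c) / (z - c)) ⁻¹' {d | χ d = g} := by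
    ext c
    simp only [mem_ofPred_eq, mem_inter_iff, mem_preimage, and_assoc]
    refine and_congr_right fun hcx => and_congr_right fun hcz => ?_
    have hxc : x - c ≠ 0 := sub_ne_zero.mpr hcx.symm
    have hzc : z - c ≠ 0 := sub_ne_zero.mpr hcz.symm
    have hlog : χ (x - c) = χ ((x - c) / (z - c)) + χ (z - c) := by
      rw [← hχ _ _ (div_ne_zero hxc hzc) hzc, div_mul_cancel₀ _ hzc]
    rw [hlog, add_sub_cancel_right]
  rw [hset, ← (hbij.injOn.mono inter_subset_left).ncard_image, image_inter_preimage,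
    hbij.image_eq]
  congr 1
  ext d
  simp [and_assoc]

-- `none` is the point at infinity of the projective line `Option F`.
def lineWeight [Zero G] (χ : F → G) : Option F → Option F → G
  | some a, some b => χ (a - b)
  | _, _ => 0

theorem ncard_lineWeight_sub_none [Finite F] [AddCommGroup G] (χ : F → G) (x : F) (g : G) :
    {y | y ≠ some x ∧ y ≠ none ∧ lineWeight χ (some x) y - lineWeight χ none y = g}.ncard =
      {d | d ≠ 0 ∧ χ d = g}.ncard := by
  classical
  rw [ncard_setOf_option]
  simp [lineWeight, ncard_fiber_sub_left]

theorem ncard_lineWeight_sub [Finite F] [AddCommGroup G] {χ : F → G}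
    (hχ : ∀ a b, a ≠ 0 → b ≠ 0 → χ (a * b) = χ a + χ b) {m : ℕ}
    (hfib : ∀ g, {d | d ≠ 0 ∧ χ d = g}.ncard = m) {r s : Option F} (hrs : r ≠ s) (g : G) :
    {y | y ≠ r ∧ y ≠ s ∧ lineWeight χ r y - lineWeight χ s y = g}.ncard = m := by
  classical
  match r, s, hrs with
  | none, none, h => exact absurd rfl h
  | some x, none, _ => rw [ncard_lineWeight_sub_none, hfib]
  | none, some x, _ =>
    have hset : {y | y ≠ none ∧ y ≠ some x ∧
        lineWeight χ none y - lineWeight χ (some x) y = g} =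
        {y | y ≠ some x ∧ y ≠ none ∧ lineWeight χ (some x) y - lineWeight χ none y = -g} := by
      ext y
      rw [mem_ofPred_eq, mem_ofPred_eq, ← neg_sub, neg_eq_iff_eq_neg]
      tauto
    rw [hset, ncard_lineWeight_sub_none, hfib]
  | some x, some z, hxz =>
    have hχ1 : χ 1 = 0 := by simpa using hχ 1 1 one_ne_zero one_ne_zero
    rw [ncard_setOf_option]
    simp only [ne_eq, Option.some.injEq, lineWeight, reduceCtorEq, not_false_eq_true, sub_self,
      true_and]
    rw [ncard_fiber_sub_sub hχ (fun h => hxz (congrArg some h)), ← hfib g,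
      ← ncard_setOf_ne_and_add 1 (fun d => d ≠ 0 ∧ χ d = g)]
    simp [hχ1, and_left_comm, eq_comm (a := (0 : G))]

open scoped Classical in
noncomputable def lineMatrix [Zero G] (χ : F → G) (r y : Option F) : Option G :=
  if y = r then none else some (lineWeight χ r y)

theorem ncard_lineMatrix_ne_none [Finite F] [Zero G] (χ : F → G) (r : Option F) :
    {y | lineMatrix χ r y ≠ none}.ncard = Nat.card F := by
  have hset : {y | lineMatrix χ r y ≠ none} = {r}ᶜ := by
    ext y; simp [lineMatrix]
  rw [hset, ncard_compl, ncard_singleton, Finite.card_option, Nat.add_sub_cancel]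

theorem setOf_lineMatrix_sub_eq [AddGroup G] (χ : F → G) (r s : Option F) (g : G) :
    {y | ∃ a b, lineMatrix χ r y = some a ∧ lineMatrix χ s y = some b ∧ a - b = g} =
      {y | y ≠ r ∧ y ≠ s ∧ lineWeight χ r y - lineWeight χ s y = g} := by
  ext y; simp [lineMatrix]

end ProjectiveLine

theorem isBGW_comp_equiv {ι : Type*} {v k lam n : ℕ} (e : Fin v ≃ ι)
    (W : ι → ι → Option (ZMod n)) (hrow : ∀ i, {c | W i c ≠ none}.ncard = k)
    (hpair : ∀ i j, i ≠ j → ∀ g : ZMod n,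
      {c | ∃ a b : ZMod n, W i c = some a ∧ W j c = some b ∧ a - b = g}.ncard = lam / n) :
    IsBGW v k lam n (fun i c => W (e i) (e c)) := by
  have hpre (S : Set ι) : (e ⁻¹' S).ncard = S.ncard :=
    ncard_preimage_of_injective_subset_range e.injective (by simp)
  exact ⟨fun i => (hpre _).trans (hrow _),
    fun i j hij g => (hpre _).trans (hpair _ _ (e.injective.ne hij) g)⟩

theorem exists_isBGW_of_finiteField (F : Type*) [Field F] [Finite F] {k : ℕ}
    (hk : k ∣ Nat.card F - 1) :
    ∃ W : Fin (Nat.card F + 1) → Fin (Nat.card F + 1) → Option (ZMod k),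
      IsBGW (Nat.card F + 1) (Nat.card F) (Nat.card F - 1) k W := by
  obtain ⟨χ, hχ, hfib⟩ := exists_log_zmod F hk
  let e : Fin (Nat.card F + 1) ≃ Option F :=
    (finCongr Finite.card_option.symm).trans (Finite.equivFin (Option F)).symm
  refine ⟨_, isBGW_comp_equiv e (lineMatrix χ) (ncard_lineMatrix_ne_none χ) fun r s hrs g => ?_⟩
  rw [setOf_lineMatrix_sub_eq]
  exact ncard_lineWeight_sub hχ hfib hrs g

theorem stmt_2_general (q t p k : ℕ) (hq : q.Prime) (ht : 1 ≤ t) (hp : p = q ^ t)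
    (hdvd : k ∣ p - 1) :
    ∃ W : Fin (p + 1) → Fin (p + 1) → Option (ZMod k), IsBGW (p + 1) p (p - 1) k W := by
  have : Fact q.Prime := ⟨hq⟩
  have hcard : Nat.card (GaloisField q t) = p := by
    rw [GaloisField.card q t (by omega), hp]
  exact hcard ▸ exists_isBGW_of_finiteField (GaloisField q t) (hcard ▸ hdvd)

/-- For every prime power `p = q^t` there is a `BGW(p+1, p, p-1)` over the cyclic group
`ℤ_k` for any positive `k` dividing `p - 1`. -/
theorem stmt_2 (q t p k : ℕ) (hq : q.Prime) (ht : 1 ≤ t) (hp : p = q ^ t)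
    (hk : 1 ≤ k) (hdvd : k ∣ p - 1) :
    ∃ W : Fin (p + 1) → Fin (p + 1) → Option (ZMod k), IsBGW (p + 1) p (p - 1) k W :=
  stmt_2_general q t p k hq ht hp hdvd
end

section
/- Let q be an odd prime power (q = r^t with r an odd prime, t ≥ 1), let m be a positive integer, and let N be the natural number with (q - 1) * N = q^(m+1) - 1. Then there exists an N × N integer matrix W with entries in {-1, 0, 1} such that W * Wᵀ = q^m • (identity matrix of order N), and such that for every pair of distinct rows i ≠ j, the number of columns c with (W i c) * (W j c) = 1 equals q^(m-1) * (q - 1) / 2 and the number of columns c with (W i c) * (W j c) = -1 also equals q^(m-1) * (q - 1) / 2. (These are the balanced weighing matrices with classical parameters W((q^(m+1)-1)/(q-1), q^m).) -/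
/-!
Index rows and columns by the points of `PG(m, q) = ℙ(F^(m+1))`, `F = 𝔽_q`, and put
`W p p' = χ(p · p')` with `χ` the quadratic character, evaluated on fixed representatives.
For linearly independent `x₁, …, x_k ∈ F^(m+1)` the map `v ↦ (x₁ · v, …, x_k · v)` is a
surjective linear map, so it hits every vector of `F^k` equally often, `q^(m+1-k)` times.
Hence a sum over `v` of `∏ᵢ ψ(xᵢ · v)`, `ψ` a multiplicative character, factors as
`q^(m+1-k) (∑ₐ ψ a)^k`; when the summand is invariant under scaling `v` it is also
`(q - 1)` times the corresponding sum over projective points. With `k = 2` and `ψ = χ` this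
gives orthogonality of distinct rows (`∑ χ = 0`), with `k = 1` and `ψ = χ²` the row norms
`q^m`, and with `k = 2` and `ψ = χ²` the number `q^(m-1) (q - 1)` of columns where two
distinct rows are both nonzero; the last two sums determine the numbers of `+1` and `-1`
products.
-/

open Matrix Finset
open scoped LinearAlgebra.Projectivization

section SignCount

variable {ι : Type*} [Fintype ι]

theorem two_mul_card_filter_eq_one (s : ι → ℤ) (hs : ∀ i, s i = -1 ∨ s i = 0 ∨ s i = 1) :
    2 * (#{i | s i = 1} : ℤ) = ∑ i, (s i ^ 2 + s i) := by
  rw [card_filter, Nat.cast_sum, mul_sum]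
  refine sum_congr rfl fun i _ => ?_
  rcases hs i with h | h | h <;> simp [h]

theorem two_mul_card_filter_eq_neg_one (s : ι → ℤ) (hs : ∀ i, s i = -1 ∨ s i = 0 ∨ s i = 1) :
    2 * (#{i | s i = -1} : ℤ) = ∑ i, (s i ^ 2 - s i) := by
  have := two_mul_card_filter_eq_one (-s) fun i => by
    rcases hs i with h | h | h <;> simp [h]
  simpa [neg_eq_iff_eq_neg, sub_eq_add_neg] using this

end SignCount

theorem Equiv.ncard_setOf_comp {α β : Type*} [Fintype β] (e : α ≃ β) (P : β → Prop)
    [DecidablePred P] : {a | P (e a)}.ncard = #{b | P b} := by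
  rw [← Set.ncard_coe_finset, coe_filter_univ]
  exact Set.ncard_preimage_of_injective_subset_range e.injective
    (e.range_eq_univ ▸ Set.subset_univ _)

theorem Fintype.natCast_card_sub_one_ne_zero (α : Type*) [Fintype α] [Nontrivial α] :
    ((Fintype.card α - 1 : ℕ) : ℤ) ≠ 0 :=
  Nat.cast_ne_zero.mpr (Nat.sub_ne_zero_of_lt Fintype.one_lt_card)

section LinearAlgebra

variable {F : Type*} [Field F] {m n : Type*} [Fintype m] [Fintype n]

theorem Matrix.mulVec_surjective_of_linearIndependent_row {A : Matrix m n F}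
    (hA : LinearIndependent F A.row) : Function.Surjective A.mulVec := by
  classical
  have hrank : Module.finrank F (LinearMap.range A.mulVecLin) = Module.finrank F (m → F) := by
    rw [← Matrix.rank, rank_eq_finrank_span_row, finrank_span_eq_card hA,
      Module.finrank_fintype_fun_eq_card]
  exact LinearMap.range_eq_top.mp (Submodule.eq_top_of_finrank_eq hrank)

variable [Fintype F] [DecidableEq m] [DecidableEq n]

/-- The fibres of the surjection `v ↦ A *ᵥ v` are cosets of its kernel, hence all of the same
size. -/
theorem Matrix.sum_comp_mulVec_of_linearIndependent_row {M : Type*} [AddCommMonoid M]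
    {A : Matrix m n F} (hA : LinearIndependent F A.row) (g : (m → F) → M) :
    ∑ v, g (A *ᵥ v) = Fintype.card F ^ (Fintype.card n - Fintype.card m) • ∑ w, g w := by
  classical
  have hsurj := mulVec_surjective_of_linearIndependent_row hA
  have hfiber (w : m → F) : #{v | A *ᵥ v = w} = #{v | A *ᵥ v = 0} :=
    AddMonoidHom.card_fiber_eq_of_mem_range A.mulVecLin.toAddMonoidHom (hsurj w) (hsurj 0)
  have hmn : Fintype.card m ≤ Fintype.card n := by
    simpa [Module.finrank_fintype_fun_eq_card] using hA.fintype_card_le_finrank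
  have hcard : #{v | A *ᵥ v = 0} * Fintype.card F ^ Fintype.card m
      = Fintype.card F ^ (Fintype.card n - Fintype.card m) * Fintype.card F ^ Fintype.card m := by
    have := card_eq_sum_card_fiberwise (s := univ) (t := univ) (f := A.mulVec) (by simp)
    simp only [hfiber, sum_const, card_univ, Fintype.card_fun, smul_eq_mul] at this
    rw [mul_comm, ← this, ← pow_add, Nat.sub_add_cancel hmn]
  rw [sum_comp, image_univ_of_surjective hsurj, smul_sum]
  simp only [hfiber, Nat.eq_of_mul_eq_mul_right (by positivity) hcard]

end LinearAlgebra

namespace Projectivization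

variable {F : Type*} [Field F] [Fintype F]

theorem sum_eq_card_sub_one_nsmul_sum_rep {V M : Type*} [AddCommGroup V] [Module F V]
    [Fintype V] [Fintype (ℙ F V)] [AddCommMonoid M] (g : V → M) (h0 : g 0 = 0)
    (hg : ∀ (c : Fˣ) v, g (c • v) = g v) :
    ∑ v, g v = (Fintype.card F - 1) • ∑ p : ℙ F V, g p.rep := by
  classical
  let e := nonZeroEquivProjectivizationProdUnits F V
  have hrep (x : ℙ F V × Fˣ) : g (e.symm x) = g x.1.rep := by
    obtain ⟨c, hc⟩ := exists_smul_eq_mk_rep F (e.symm x).1 (e.symm x).2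
    have hx : mk F (e.symm x).1 (e.symm x).2 = x.1 := congrArg Prod.fst (e.apply_symm_apply x)
    rw [← hx, ← hc, hg]
  calc ∑ v, g v = ∑ v : {v : V // v ≠ 0}, g v := by
        rw [← sum_filter_of_ne (p := (· ≠ 0)) (fun v _ hv h => hv (h ▸ h0)), sum_subtype]
        simp
    _ = ∑ x : ℙ F V × Fˣ, g x.1.rep := by
        rw [← e.symm.sum_comp]
        exact Fintype.sum_congr _ _ hrep
    _ = (Fintype.card F - 1) • ∑ p : ℙ F V, g p.rep := by
        rw [Fintype.sum_prod_type, sum_comm]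
        simp [Fintype.card_units]

theorem card_sub_one_mul_card_fun (n : Type*) [Fintype n] [DecidableEq n]
    [Fintype (ℙ F (n → F))] :
    (Fintype.card F - 1) * Fintype.card (ℙ F (n → F)) = Fintype.card F ^ Fintype.card n - 1 := by
  have := Projectivization.card F (n → F)
  simp only [Nat.card_eq_fintype_card, Fintype.card_fun] at this
  rw [this, mul_comm]

theorem card_sub_one_nsmul_sum_prod_mulChar {ι n R : Type*} [Fintype ι] [DecidableEq ι]
    [Nonempty ι] [Fintype n] [DecidableEq n] [Fintype (ℙ F (n → F))] [CommRing R]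
    (χ : MulChar F R) (hχ : ∀ c : Fˣ, χ c ^ Fintype.card ι = 1) {x : ι → n → F}
    (hx : LinearIndependent F x) :
    (Fintype.card F - 1) • ∑ p : ℙ F (n → F), ∏ i, χ (x i ⬝ᵥ p.rep)
      = Fintype.card F ^ (Fintype.card n - Fintype.card ι) • (∑ a, χ a) ^ Fintype.card ι := by
  rw [← sum_eq_card_sub_one_nsmul_sum_rep (fun v => ∏ i, χ (x i ⬝ᵥ v))]
  · rw [← card_univ (α := ι), ← prod_const, Fintype.prod_sum]
    exact Matrix.sum_comp_mulVec_of_linearIndependent_row (A := Matrix.of x) hx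
      fun w => ∏ i, χ (w i)
  · simp [MulChar.map_zero, Fintype.card_ne_zero]
  · intro c v
    simp [Units.smul_def, dotProduct_smul, prod_mul_distrib, hχ]

end Projectivization

section QuadraticCharMatrix

variable (F n : Type*) [Field F] [Fintype F] [DecidableEq F] [Fintype n]

/-- The entries depend on the choice of representatives `p.rep` only up to the signs of
rows and columns. -/
noncomputable def quadraticCharMatrix : Matrix (ℙ F (n → F)) (ℙ F (n → F)) ℤ :=
  Matrix.of fun p p' => quadraticChar F (p.rep ⬝ᵥ p'.rep)

variable {F n}

theorem sq_quadraticChar_eq_one_apply (a : F) : quadraticChar F a ^ 2 = (1 : MulChar F ℤ) a := by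
  rw [← MulChar.pow_apply' _ two_ne_zero, (quadraticChar_isQuadratic F).sq_eq_one]

theorem quadraticCharMatrix_trichotomy (p p' : ℙ F (n → F)) :
    quadraticCharMatrix F n p p' = -1 ∨ quadraticCharMatrix F n p p' = 0 ∨
      quadraticCharMatrix F n p p' = 1 := by
  simp only [quadraticCharMatrix, of_apply]
  by_cases h : p.rep ⬝ᵥ p'.rep = 0
  · simp [h]
  · rcases quadraticChar_dichotomy h with h' | h' <;> simp [h']

variable [DecidableEq n] [Fintype (ℙ F (n → F))]

theorem sum_quadraticCharMatrix_mul_self (p : ℙ F (n → F)) :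
    ∑ c, quadraticCharMatrix F n p c * quadraticCharMatrix F n p c
      = (Fintype.card F ^ (Fintype.card n - 1) : ℕ) := by
  have key := Projectivization.card_sub_one_nsmul_sum_prod_mulChar (ι := Fin 1)
    (x := fun _ => p.rep) (1 : MulChar F ℤ) (by simp)
    (linearIndependent_unique_iff.mpr p.rep_nonzero)
  simp only [MulChar.sum_one_eq_card_units, Fintype.card_units, Fintype.card_fin, pow_one,
    univ_unique, prod_singleton, nsmul_eq_mul] at key
  simp only [quadraticCharMatrix, of_apply, ← pow_two, sq_quadraticChar_eq_one_apply]
  exact mul_left_cancel₀ (Fintype.natCast_card_sub_one_ne_zero F) (key.trans (mul_comm _ _))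

theorem sum_quadraticCharMatrix_mul_of_ne (hF : ringChar F ≠ 2) {p p' : ℙ F (n → F)}
    (h : p ≠ p') :
    ∑ c, quadraticCharMatrix F n p c * quadraticCharMatrix F n p' c = 0 := by
  have key := Projectivization.card_sub_one_nsmul_sum_prod_mulChar (ι := Fin 2)
    (quadraticChar F) (fun c => by simpa using quadraticChar_sq_one c.ne_zero)
    (Projectivization.independent_iff.mp ((Projectivization.independent_pair_iff_ne p p').mpr h))
  simp only [quadraticChar_sum_zero hF, Fin.prod_univ_two, Function.comp_apply,
    cons_val_zero, cons_val_one, Fintype.card_fin, nsmul_eq_mul] at key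
  refine mul_left_cancel₀ (Fintype.natCast_card_sub_one_ne_zero F) (key.trans ?_)
  simp

theorem sum_quadraticCharMatrix_mul_sq_of_ne {p p' : ℙ F (n → F)} (h : p ≠ p') :
    ∑ c, (quadraticCharMatrix F n p c * quadraticCharMatrix F n p' c) ^ 2
      = (Fintype.card F ^ (Fintype.card n - 2) * (Fintype.card F - 1) : ℕ) := by
  have key := Projectivization.card_sub_one_nsmul_sum_prod_mulChar (ι := Fin 2)
    (1 : MulChar F ℤ) (by simp)
    (Projectivization.independent_iff.mp ((Projectivization.independent_pair_iff_ne p p').mpr h))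
  simp only [MulChar.sum_one_eq_card_units, Fintype.card_units, Fintype.card_fin,
    Fin.prod_univ_two, Function.comp_apply, cons_val_zero, cons_val_one,
    nsmul_eq_mul] at key
  simp only [quadraticCharMatrix, of_apply, mul_pow, sq_quadraticChar_eq_one_apply]
  refine mul_left_cancel₀ (Fintype.natCast_card_sub_one_ne_zero F) (key.trans ?_)
  push_cast
  ring

theorem quadraticCharMatrix_mul_transpose [DecidableEq (ℙ F (n → F))] (hF : ringChar F ≠ 2) :
    quadraticCharMatrix F n * (quadraticCharMatrix F n)ᵀ
      = ((Fintype.card F ^ (Fintype.card n - 1) : ℕ) : ℤ) • 1 := by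
  ext p p'
  simp only [mul_apply, transpose_apply, Matrix.smul_apply, smul_eq_mul]
  obtain rfl | h := eq_or_ne p p'
  · rw [sum_quadraticCharMatrix_mul_self, one_apply_eq, mul_one]
  · rw [sum_quadraticCharMatrix_mul_of_ne hF h, one_apply_ne h, mul_zero]

theorem two_mul_card_quadraticCharMatrix_mul_eq_of_ne (hF : ringChar F ≠ 2)
    {p p' : ℙ F (n → F)} (h : p ≠ p') {ε : ℤ} (hε : ε = 1 ∨ ε = -1) :
    2 * #{c | quadraticCharMatrix F n p c * quadraticCharMatrix F n p' c = ε}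
      = Fintype.card F ^ (Fintype.card n - 2) * (Fintype.card F - 1) := by
  set s := fun c => quadraticCharMatrix F n p c * quadraticCharMatrix F n p' c
  have hs (c : ℙ F (n → F)) : s c = -1 ∨ s c = 0 ∨ s c = 1 := by
    rcases quadraticCharMatrix_trichotomy p c with h₁ | h₁ | h₁ <;>
    rcases quadraticCharMatrix_trichotomy p' c with h₂ | h₂ | h₂ <;> simp [s, h₁, h₂]
  zify
  rcases hε with rfl | rfl
  · rw [two_mul_card_filter_eq_one s hs, sum_add_distrib,
      sum_quadraticCharMatrix_mul_sq_of_ne h, sum_quadraticCharMatrix_mul_of_ne hF h]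
    push_cast
    ring
  · rw [two_mul_card_filter_eq_neg_one s hs, sum_sub_distrib,
      sum_quadraticCharMatrix_mul_sq_of_ne h, sum_quadraticCharMatrix_mul_of_ne hF h]
    push_cast
    ring

end QuadraticCharMatrix

theorem stmt_3_general (r t q m N : ℕ) (hr : r.Prime) (hodd : Odd r) (ht : 1 ≤ t) (hq : q = r ^ t)
    (hN : (q - 1) * N = q ^ (m + 1) - 1) :
    ∃ W : Matrix (Fin N) (Fin N) ℤ,
      (∀ i j, W i j = -1 ∨ W i j = 0 ∨ W i j = 1) ∧
      W * Wᵀ = ((q ^ m : ℕ) : ℤ) • 1 ∧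
      ∀ i j : Fin N, i ≠ j →
        {c : Fin N | W i c * W j c = 1}.ncard = q ^ (m - 1) * (q - 1) / 2 ∧
        {c : Fin N | W i c * W j c = -1}.ncard = q ^ (m - 1) * (q - 1) / 2 := by
  classical
  have : Fact r.Prime := ⟨hr⟩
  let F := GaloisField r t
  let _ : Fintype F := Fintype.ofFinite F
  let _ : Fintype (ℙ F (Fin (m + 1) → F)) := Fintype.ofFinite _
  have hq : Fintype.card F = q := by
    rw [hq, Fintype.card_eq_nat_card, GaloisField.card r t (by omega)]
  have hF : ringChar F ≠ 2 := by
    rw [ringChar.eq F r]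
    rintro rfl
    exact absurd hodd (by decide)
  have hN : Fintype.card (ℙ F (Fin (m + 1) → F)) = N := by
    refine Nat.eq_of_mul_eq_mul_left (hq ▸ Nat.sub_pos_of_lt Fintype.one_lt_card) ?_
    rw [hN, ← hq, Projectivization.card_sub_one_mul_card_fun, Fintype.card_fin]
  let e : Fin N ≃ ℙ F (Fin (m + 1) → F) := (Fintype.equivFinOfCardEq hN).symm
  refine ⟨(quadraticCharMatrix F (Fin (m + 1))).submatrix e e,
    fun i j => quadraticCharMatrix_trichotomy _ _, ?_, fun i j hij => ?_⟩
  · rw [transpose_submatrix, submatrix_mul_equiv, quadraticCharMatrix_mul_transpose hF, hq,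
      Fintype.card_fin, Nat.add_sub_cancel]
    ext i j
    simp only [submatrix_apply, Matrix.smul_apply, one_apply, e.injective.eq_iff]
  · have hcount (ε : ℤ) (hε : ε = 1 ∨ ε = -1) :
        {c | quadraticCharMatrix F _ (e i) (e c) * quadraticCharMatrix F _ (e j) (e c) = ε}.ncard
          = q ^ (m - 1) * (q - 1) / 2 := by
      have := two_mul_card_quadraticCharMatrix_mul_eq_of_ne hF (e.injective.ne hij) hε
      rw [hq, Fintype.card_fin, show m + 1 - 2 = m - 1 by omega] at this
      rw [← this, Nat.mul_div_cancel_left _ two_pos]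
      exact e.ncard_setOf_comp
        fun c => quadraticCharMatrix F _ (e i) c * quadraticCharMatrix F _ (e j) c = ε
    exact ⟨hcount 1 (.inl rfl), hcount (-1) (.inr rfl)⟩

/-- For an odd prime power `q = r^t` and a positive integer `m`, there is a balanced
weighing matrix with classical parameters `W((q^(m+1)-1)/(q-1), q^m)`: an `N × N`
`(0, ±1)`-matrix `W` with `W * Wᵀ = q^m • 1` such that for distinct rows the number of
columns with product `+1` equals the number with product `-1`, both being
`q^(m-1) * (q-1) / 2`. -/
theorem stmt_3 (r t q m N : ℕ) (hr : r.Prime) (hodd : Odd r) (ht : 1 ≤ t) (hq : q = r ^ t)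
    (hm : 1 ≤ m) (hN : (q - 1) * N = q ^ (m + 1) - 1) :
    ∃ W : Matrix (Fin N) (Fin N) ℤ,
      (∀ i j, W i j = -1 ∨ W i j = 0 ∨ W i j = 1) ∧
      W * Wᵀ = ((q ^ m : ℕ) : ℤ) • 1 ∧
      ∀ i j : Fin N, i ≠ j →
        {c : Fin N | W i c * W j c = 1}.ncard = q ^ (m - 1) * (q - 1) / 2 ∧
        {c : Fin N | W i c * W j c = -1}.ncard = q ^ (m - 1) * (q - 1) / 2 :=
  stmt_3_general r t q m N hr hodd ht hq hN
end

section
/- Let p ≥ 2, m ≥ 1, c be natural numbers, and let N and a be natural numbers with (p - 1) * N = p^(m+1) - 1 and (p - 1) * a = p^m - 1. Let D be a p × c integer matrix with entries in {-1, 0, 1} satisfying D * Dᵀ = p • I_p - J_p. Let O : Fin (p^(m+1)) → Fin N → Fin p be an array such that any two distinct rows of O agree in exactly a columns. Define the p^(m+1) × (N * c) integer matrix 𝒟 (with columns indexed by Fin N × Fin c) by 𝒟 i (s, t) = D (O i s) t. Then 𝒟 * 𝒟ᵀ = p^(m+1) • I - J, where I and J are the identity and all-ones matrices of order p^(m+1).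 -/
/-!
Entry `(i, j)` of `𝒟 * 𝒟ᵀ` is `∑ s, (D * Dᵀ) (O i s) (O j s) = p * #{s | O i s = O j s} - N`.
The two parameter relations force `N = p * a + 1`, so the off-diagonal entries are
`p * a - N = -1`, while the diagonal entries are `p * N - N = p ^ (m + 1) - 1`.
-/

open Matrix Finset

section RowSubstitution

variable {ι σ α β R : Type*}

def rowSubstitution (D : Matrix α β R) (O : ι → σ → α) : Matrix ι (σ × β) R :=
  of fun i s => D (O i s.1) s.2

variable [Fintype σ] [Fintype β]

theorem rowSubstitution_mul_transpose_apply [NonUnitalNonAssocSemiring R]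
    (D : Matrix α β R) (O : ι → σ → α) (i j : ι) :
    (rowSubstitution D O * (rowSubstitution D O)ᵀ) i j = ∑ s, (D * Dᵀ) (O i s) (O j s) := by
  simp only [rowSubstitution, mul_apply, transpose_apply, of_apply, Fintype.sum_prod_type]

theorem rowSubstitution_mul_transpose_apply_of_mul_transpose_eq [Ring R] [DecidableEq α]
    (k : R) (D : Matrix α β R) (hD : D * Dᵀ = k • 1 - of fun _ _ => 1)
    (O : ι → σ → α) (i j : ι) :
    (rowSubstitution D O * (rowSubstitution D O)ᵀ) i j =
      #{s | O i s = O j s} * k - Fintype.card σ := by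
  simp only [rowSubstitution_mul_transpose_apply, hD, Matrix.sub_apply, Matrix.smul_apply,
    one_apply, of_apply, smul_eq_mul, mul_ite, mul_one, mul_zero, sum_sub_distrib,
    ← sum_filter, sum_const, nsmul_eq_mul, card_univ]

end RowSubstitution

theorem eq_mul_add_one_of_sub_one_mul_eq {p m N a : ℕ} (hp : 2 ≤ p)
    (hN : (p - 1) * N = p ^ (m + 1) - 1) (ha : (p - 1) * a = p ^ m - 1) :
    N = p * a + 1 := by
  have hpow : 1 ≤ p ^ m := Nat.one_le_pow _ _ (by omega)
  refine Nat.eq_of_mul_eq_mul_left (show 0 < p - 1 by omega) ?_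
  rw [hN, mul_add, mul_left_comm, ha]
  zify [hpow, Nat.one_le_pow (m + 1) p (by omega), show 1 ≤ p by omega]
  ring

theorem stmt_5_general (p m c N a : ℕ) (hp : 2 ≤ p)
    (hN : (p - 1) * N = p ^ (m + 1) - 1) (ha : (p - 1) * a = p ^ m - 1)
    (D : Matrix (Fin p) (Fin c) ℤ)
    (hD : D * Dᵀ = (p : ℤ) • 1 - Matrix.of fun _ _ => 1)
    (O : Fin (p ^ (m + 1)) → Fin N → Fin p)
    (hO : ∀ i j : Fin (p ^ (m + 1)), i ≠ j → {s : Fin N | O i s = O j s}.ncard = a) :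
    (Matrix.of fun (i : Fin (p ^ (m + 1))) (s : Fin N × Fin c) => D (O i s.1) s.2) *
      (Matrix.of fun (i : Fin (p ^ (m + 1))) (s : Fin N × Fin c) => D (O i s.1) s.2)ᵀ =
      ((p ^ (m + 1) : ℕ) : ℤ) • 1 - Matrix.of fun _ _ => 1 := by
  change rowSubstitution D O * (rowSubstitution D O)ᵀ = _
  ext i j
  rw [rowSubstitution_mul_transpose_apply_of_mul_transpose_eq (p : ℤ) D hD]
  rcases eq_or_ne i j with rfl | hij
  · have hpow : 1 ≤ p ^ (m + 1) := Nat.one_le_pow _ _ (by omega)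
    zify [hpow, show 1 ≤ p by omega] at hN
    simp only [filter_true, card_univ, Fintype.card_fin, Matrix.sub_apply, Matrix.smul_apply,
      one_apply_eq, of_apply, smul_eq_mul]
    push_cast
    linear_combination hN
  · have hagree : #{s | O i s = O j s} = a := by
      rw [← hO i j hij, Set.ncard_eq_toFinset_card', Set.toFinset_ofPred]
    rw [hagree, eq_mul_add_one_of_sub_one_mul_eq hp hN ha]
    simp only [Fintype.card_fin, Matrix.sub_apply, Matrix.smul_apply, one_apply_ne hij, of_apply]
    push_cast
    ring

/-- Let `D` be the derived part of a normalized weighing matrix of weight `p`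
(`D * Dᵀ = p • I - J`), and let `O` be an orthogonal array on `p` symbols of dimensions
`p^(m+1) × N` in which any two distinct rows agree in exactly `a` columns, where
`(p-1) * N = p^(m+1) - 1` and `(p-1) * a = p^m - 1`.  Then the matrix `𝒟` obtained
from `O` by replacing each symbol by the corresponding row of `D` satisfies
`𝒟 * 𝒟ᵀ = p^(m+1) • I - J`. -/
theorem stmt_5 (p m c N a : ℕ) (hp : 2 ≤ p) (hm : 1 ≤ m)
    (hN : (p - 1) * N = p ^ (m + 1) - 1) (ha : (p - 1) * a = p ^ m - 1)
    (D : Matrix (Fin p) (Fin c) ℤ)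
    (hD01 : ∀ i j, D i j = -1 ∨ D i j = 0 ∨ D i j = 1)
    (hD : D * Dᵀ = (p : ℤ) • 1 - Matrix.of fun _ _ => 1)
    (O : Fin (p ^ (m + 1)) → Fin N → Fin p)
    (hO : ∀ i j : Fin (p ^ (m + 1)), i ≠ j → {s : Fin N | O i s = O j s}.ncard = a) :
    (Matrix.of fun (i : Fin (p ^ (m + 1))) (s : Fin N × Fin c) => D (O i s.1) s.2) *
      (Matrix.of fun (i : Fin (p ^ (m + 1))) (s : Fin N × Fin c) => D (O i s.1) s.2)ᵀ =
      ((p ^ (m + 1) : ℕ) : ℤ) • 1 - Matrix.of fun _ _ => 1 :=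
  stmt_5_general p m c N a hp hN ha D hD O hO
end

section
/- Let p ≥ 3 be an odd natural number, m ≥ 1, and let N be a natural number with (p - 1) * N = p^(m+1) - 1. Let W be an N × N integer matrix with entries in {-1, 0, 1} such that W * Wᵀ = p^m • I_N and such that for all distinct rows i ≠ j, the number of columns c with (W i c) * (W j c) = 1 equals p^(m-1) * (p-1) / 2 and the number of columns c with (W i c) * (W j c) = -1 equals p^(m-1) * (p-1) / 2. Let R be a (p+1) × 2p matrix with entries in {0, 1} such that R * Rᵀ = ((p+1)/2) • I + ((p-1)/2) • J, every column of R sums to (p+1)/2, every row of R sums to p, and (J - R) * (J - R)ᵀ = ((p+1)/2) • I + ((p-1)/2) • J. Write W = W⁺ - W⁻ where W⁺ and W⁻ are the (0,1)-matrices recording the +1 and -1 entries of W, and set 𝓡 = W⁺ ⊗ R + W⁻ ⊗ (J - R) (Kronecker products). Then 𝓡 * 𝓡ᵀ = (p^m * (p+1) / 2) • I + (p^m * (p-1) / 2) • J, and every column of 𝓡 sums to p^m * (p+1) / 2; that is, 𝓡 is the incidence matrix of a quasi-residual BIBD((p+1)N, 2pN, p^(m+1), p^m(p+1)/2, p^m(p-1)/2).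 -/
open Matrix Kronecker

/-- The `(0,1)`-matrix recording the `+1` entries of `W`. -/
def posPart {m n : Type*} (W : Matrix m n ℤ) : Matrix m n ℤ :=
  Matrix.of fun i j => if W i j = 1 then 1 else 0

/-- The `(0,1)`-matrix recording the `-1` entries of `W`. -/
def negPart {m n : Type*} (W : Matrix m n ℤ) : Matrix m n ℤ :=
  Matrix.of fun i j => if W i j = -1 then 1 else 0

/-- `𝓡 = W⁺ ⊗ R + W⁻ ⊗ (J - R)`, where `R'= J - R` is the twin mate of `R`. -/
def calR (p N : ℕ) (W : Matrix (Fin N) (Fin N) ℤ)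
    (R : Matrix (Fin (p + 1)) (Fin (2 * p)) ℤ) :
    Matrix (Fin N × Fin (p + 1)) (Fin N × Fin (2 * p)) ℤ :=
  posPart W ⊗ₖ R + negPart W ⊗ₖ ((Matrix.of fun _ _ => (1 : ℤ)) - R)

lemma posPart_apply {m n : Type*} (W : Matrix m n ℤ) (i : m) (j : n) :
    posPart W i j = if W i j = 1 then 1 else 0 := rfl

lemma negPart_apply {m n : Type*} (W : Matrix m n ℤ) (i : m) (j : n) :
    negPart W i j = if W i j = -1 then 1 else 0 := rfl

lemma sum_boole_ncard {N : ℕ} (P : Fin N → Prop) [DecidablePred P] :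
    (∑ c, if P c then (1:ℤ) else 0) = ({c | P c}.ncard : ℤ) := by
  rw [Finset.sum_boole, Set.ncard_eq_toFinset_card']
  simp

lemma wtw_comm {n : Type*} [Fintype n] [DecidableEq n] (W : Matrix n n ℤ) (d : ℤ) (hd : d ≠ 0)
    (h : W * Wᵀ = d • 1) : Wᵀ * W = d • 1 := by
  set f : ℤ →+* ℚ := Int.castRingHom ℚ
  have hq : (W.map f) * (W.map f)ᵀ = (d:ℚ) • 1 := by
    ext i j
    have := congrFun (congrFun h i) j
    simp only [Matrix.mul_apply, Matrix.transpose_apply, Matrix.map_apply, Matrix.smul_apply,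
      Matrix.one_apply, smul_eq_mul, f, Int.coe_castRingHom] at this ⊢
    split_ifs at this ⊢ <;> exact_mod_cast this
  have h2 : (W.map f) * ((d:ℚ)⁻¹ • (W.map f)ᵀ) = 1 := by
    rw [Matrix.mul_smul, hq, smul_smul, inv_mul_cancel₀ (by exact_mod_cast hd), one_smul]
  have h3 : ((d:ℚ)⁻¹ • (W.map f)ᵀ) * (W.map f) = 1 := mul_eq_one_comm.mp h2
  have h4 : (W.map f)ᵀ * (W.map f) = (d:ℚ) • 1 := by
    rw [Matrix.smul_mul] at h3
    calc (W.map f)ᵀ * (W.map f) = (d:ℚ) • ((d:ℚ)⁻¹ • ((W.map f)ᵀ * (W.map f))) := by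
          rw [smul_smul, mul_inv_cancel₀ (by exact_mod_cast hd), one_smul]
      _ = (d:ℚ) • 1 := by rw [h3]
  ext i j
  have := congrFun (congrFun h4 i) j
  simp only [Matrix.mul_apply, Matrix.transpose_apply, Matrix.map_apply, Matrix.smul_apply,
    Matrix.one_apply, smul_eq_mul, f, Int.coe_castRingHom] at this ⊢
  split_ifs at this ⊢ <;> exact_mod_cast this

/-- If `W` is a balanced weighing matrix `W(N, p^m)` (with `(p-1) * N = p^(m+1) - 1`) and
`R` is the residual design of a symmetric `2-(2p+1, p, (p-1)/2)` design possessing a twin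
mate, then `𝓡 = W⁺ ⊗ R + W⁻ ⊗ (J - R)` is the incidence matrix of a quasi-residual
`BIBD((p+1)N, 2pN, p^(m+1), p^m(p+1)/2, p^m(p-1)/2)`. -/
theorem stmt_7 (p m N : ℕ) (hp : 3 ≤ p) (hpodd : Odd p) (hm : 1 ≤ m)
    (hN : (p - 1) * N = p ^ (m + 1) - 1)
    (W : Matrix (Fin N) (Fin N) ℤ)
    (hW : ∀ i j, W i j = -1 ∨ W i j = 0 ∨ W i j = 1)
    (horth : W * Wᵀ = ((p ^ m : ℕ) : ℤ) • 1)
    (hbal : ∀ i j : Fin N, i ≠ j →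
      {c : Fin N | W i c * W j c = 1}.ncard = p ^ (m - 1) * (p - 1) / 2 ∧
      {c : Fin N | W i c * W j c = -1}.ncard = p ^ (m - 1) * (p - 1) / 2)
    (R : Matrix (Fin (p + 1)) (Fin (2 * p)) ℤ)
    (hR01 : ∀ i j, R i j = 0 ∨ R i j = 1)
    (hRR : R * Rᵀ = (((p + 1) / 2 : ℕ) : ℤ) • 1 +
      (((p - 1) / 2 : ℕ) : ℤ) • (Matrix.of fun _ _ => (1 : ℤ)))
    (hRcol : ∀ j, (∑ i, R i j) = (((p + 1) / 2 : ℕ) : ℤ))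
    (hRrow : ∀ i, (∑ j, R i j) = (p : ℤ))
    (hTwin : ((Matrix.of fun _ _ => (1 : ℤ)) - R) * ((Matrix.of fun _ _ => (1 : ℤ)) - R)ᵀ =
      (((p + 1) / 2 : ℕ) : ℤ) • 1 + (((p - 1) / 2 : ℕ) : ℤ) • (Matrix.of fun _ _ => (1 : ℤ))) :
    calR p N W R * (calR p N W R)ᵀ = ((p ^ m * (p + 1) / 2 : ℕ) : ℤ) • 1 +
      ((p ^ m * (p - 1) / 2 : ℕ) : ℤ) • (Matrix.of fun _ _ => (1 : ℤ)) ∧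
    ∀ c, (∑ r, calR p N W R r c) = ((p ^ m * (p + 1) / 2 : ℕ) : ℤ) := by
  obtain ⟨k, rfl⟩ := hpodd
  -- natural number arithmetic simplifications
  have hk1 : (2 * k + 1 + 1) / 2 = k + 1 := by omega
  have hk2 : (2 * k + 1 - 1) / 2 = k := by omega
  have e1 : (2 * k + 1) ^ m * (2 * k + 1 + 1) / 2 = (2 * k + 1) ^ m * (k + 1) := by
    rw [show (2 * k + 1) ^ m * (2 * k + 1 + 1) = ((2 * k + 1) ^ m * (k + 1)) * 2 by ring]
    exact Nat.mul_div_cancel _ two_pos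
  have e2 : (2 * k + 1) ^ m * (2 * k + 1 - 1) / 2 = (2 * k + 1) ^ m * k := by
    rw [show 2 * k + 1 - 1 = 2 * k from by omega,
      show (2 * k + 1) ^ m * (2 * k) = ((2 * k + 1) ^ m * k) * 2 by ring]
    exact Nat.mul_div_cancel _ two_pos
  have e3 : (2 * k + 1) ^ (m - 1) * (2 * k + 1 - 1) / 2 = (2 * k + 1) ^ (m - 1) * k := by
    rw [show 2 * k + 1 - 1 = 2 * k from by omega,
      show (2 * k + 1) ^ (m - 1) * (2 * k) = ((2 * k + 1) ^ (m - 1) * k) * 2 by ring]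
    exact Nat.mul_div_cancel _ two_pos
  rw [e1, e2]
  simp only [hk1, hk2] at hRR hRcol hTwin
  -- pointwise facts about posPart/negPart
  have hpp : ∀ i j c, posPart W i c * posPart W j c + negPart W i c * negPart W j c
      = if W i c * W j c = 1 then 1 else 0 := by
    intro i j c
    rcases hW i c with h1 | h1 | h1 <;> rcases hW j c with h2 | h2 | h2 <;>
      norm_num [posPart_apply, negPart_apply, h1, h2]
  have hpn : ∀ i j c, posPart W i c * negPart W j c + negPart W i c * posPart W j c
      = if W i c * W j c = -1 then 1 else 0 := by
    intro i j c
    rcases hW i c with h1 | h1 | h1 <;> rcases hW j c with h2 | h2 | h2 <;>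
      norm_num [posPart_apply, negPart_apply, h1, h2]
  -- R block sums
  have hA : ∀ a b, (∑ x, R a x * R b x)
      = ((k : ℤ) + 1) * (if a = b then 1 else 0) + k := by
    intro a b
    have := congrFun (congrFun hRR a) b
    simp only [Matrix.mul_apply, Matrix.transpose_apply, Matrix.add_apply, Matrix.smul_apply,
      Matrix.one_apply, Matrix.of_apply, smul_eq_mul, mul_one] at this
    rw [this]
    push_cast
    ring
  have hD : ∀ a b, (∑ x, (1 - R a x) * (1 - R b x))
      = ((k : ℤ) + 1) * (if a = b then 1 else 0) + k := by
    intro a b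
    have := congrFun (congrFun hTwin a) b
    simp only [Matrix.mul_apply, Matrix.transpose_apply, Matrix.add_apply, Matrix.smul_apply,
      Matrix.one_apply, Matrix.of_apply, Matrix.sub_apply, smul_eq_mul, mul_one] at this
    rw [this]
    push_cast
    ring
  have hB : ∀ a b, (∑ x, R a x * (1 - R b x))
      = ((k : ℤ) + 1) * (if a = b then 0 else 1) := by
    intro a b
    have h1 : (∑ x, R a x * (1 - R b x)) = (∑ x, R a x) - ∑ x, R a x * R b x := by
      rw [← Finset.sum_sub_distrib]
      exact Finset.sum_congr rfl fun x _ => by ring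
    rw [h1, hRrow, hA]
    push_cast
    split_ifs <;> ring
  have hB' : ∀ a b, (∑ x, (1 - R a x) * R b x)
      = ((k : ℤ) + 1) * (if a = b then 0 else 1) := by
    intro a b
    have h1 : (∑ x, (1 - R a x) * R b x) = (∑ x, R b x) - ∑ x, R a x * R b x := by
      rw [← Finset.sum_sub_distrib]
      exact Finset.sum_congr rfl fun x _ => by ring
    rw [h1, hRrow, hA]
    push_cast
    split_ifs <;> ring
  -- row/column weights of W
  have hWdiag : ∀ i, (∑ c, W i c * W i c) = ((2 * (k:ℤ) + 1)) ^ m := by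
    intro i
    have := congrFun (congrFun horth i) i
    simp only [Matrix.mul_apply, Matrix.transpose_apply, Matrix.smul_apply, Matrix.one_apply_eq,
      smul_eq_mul, mul_one] at this
    rw [this]; push_cast; ring
  have hdne : (((2 * k + 1) ^ m : ℕ) : ℤ) ≠ 0 := by positivity
  have hWT := wtw_comm W _ hdne horth
  have hWcol : ∀ c, (∑ i, W i c * W i c) = ((2 * (k:ℤ) + 1)) ^ m := by
    intro c
    have := congrFun (congrFun hWT c) c
    simp only [Matrix.mul_apply, Matrix.transpose_apply, Matrix.smul_apply, Matrix.one_apply_eq,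
      smul_eq_mul, mul_one] at this
    rw [this]; push_cast; ring
  -- entry formula for calR
  have hcal : ∀ (i : Fin N) (a : Fin (2 * k + 1 + 1)) (c : Fin N) (x : Fin (2 * (2 * k + 1))),
      calR (2 * k + 1) N W R (i, a) (c, x)
        = posPart W i c * R a x + negPart W i c * (1 - R a x) := by
    intro i a c x
    simp [calR, Matrix.kroneckerMap_apply, Matrix.add_apply, Matrix.sub_apply]
  constructor
  · ext ⟨i, a⟩ ⟨j, b⟩
    rw [Matrix.mul_apply]
    rw [Fintype.sum_prod_type]
    have hinner : ∀ c, (∑ x, calR (2 * k + 1) N W R (i, a) (c, x)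
          * (calR (2 * k + 1) N W R)ᵀ (c, x) (j, b))
        = (if W i c * W j c = 1 then 1 else 0) * (((k:ℤ) + 1) * (if a = b then 1 else 0) + k)
          + (if W i c * W j c = -1 then 1 else 0) * (((k:ℤ) + 1) * (if a = b then 0 else 1)) := by
      intro c
      simp only [Matrix.transpose_apply, hcal]
      have expand : ∀ x : Fin (2 * (2 * k + 1)),
          (posPart W i c * R a x + negPart W i c * (1 - R a x))
            * (posPart W j c * R b x + negPart W j c * (1 - R b x))
          = posPart W i c * posPart W j c * (R a x * R b x)
            + posPart W i c * negPart W j c * (R a x * (1 - R b x))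
            + negPart W i c * posPart W j c * ((1 - R a x) * R b x)
            + negPart W i c * negPart W j c * ((1 - R a x) * (1 - R b x)) := fun x => by ring
      rw [Finset.sum_congr rfl fun x _ => expand x]
      rw [Finset.sum_add_distrib, Finset.sum_add_distrib, Finset.sum_add_distrib,
        ← Finset.mul_sum, ← Finset.mul_sum, ← Finset.mul_sum, ← Finset.mul_sum,
        hA, hB, hB', hD]
      linear_combination (((k:ℤ) + 1) * (if a = b then 1 else 0) + k) * hpp i j c
        + (((k:ℤ) + 1) * (if a = b then 0 else 1)) * hpn i j c
    rw [Finset.sum_congr rfl fun c _ => hinner c]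
    rw [Finset.sum_add_distrib, ← Finset.sum_mul, ← Finset.sum_mul]
    by_cases hij : i = j
    · subst hij
      have hS1 : (∑ c, if W i c * W i c = 1 then (1:ℤ) else 0) = (2 * (k:ℤ) + 1) ^ m := by
        rw [Finset.sum_congr rfl fun c _ => show (if W i c * W i c = 1 then (1:ℤ) else 0)
            = W i c * W i c by rcases hW i c with h | h | h <;> norm_num [h]]
        exact hWdiag i
      have hS2 : (∑ c, if W i c * W i c = -1 then (1:ℤ) else 0) = 0 := by
        refine Finset.sum_eq_zero fun c _ => ?_
        rcases hW i c with h | h | h <;> norm_num [h]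
      rw [hS1, hS2]
      simp only [Matrix.add_apply, Matrix.smul_apply, Matrix.one_apply, Matrix.of_apply,
        Prod.mk.injEq, true_and, smul_eq_mul, mul_one]
      push_cast
      split_ifs <;> ring
    · obtain ⟨hb1, hb2⟩ := hbal i j hij
      rw [e3] at hb1 hb2
      have hS1 : (∑ c, if W i c * W j c = 1 then (1:ℤ) else 0)
          = (2 * (k:ℤ) + 1) ^ (m - 1) * k := by
        rw [sum_boole_ncard, hb1]; push_cast; ring
      have hS2 : (∑ c, if W i c * W j c = -1 then (1:ℤ) else 0)
          = (2 * (k:ℤ) + 1) ^ (m - 1) * k := by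
        rw [sum_boole_ncard, hb2]; push_cast; ring
      rw [hS1, hS2]
      have hone : (1 : Matrix (Fin N × Fin (2 * k + 1 + 1)) (Fin N × Fin (2 * k + 1 + 1)) ℤ)
          (i, a) (j, b) = 0 := by
        rw [Matrix.one_apply_ne (by simp [Prod.ext_iff, hij])]
      simp only [Matrix.add_apply, Matrix.smul_apply, Matrix.of_apply, hone, smul_eq_mul,
        mul_zero, mul_one, zero_add]
      have hpow : (2 * (k:ℤ) + 1) ^ (m - 1) * (2 * (k:ℤ) + 1) = (2 * (k:ℤ) + 1) ^ m := by
        rw [← pow_succ, Nat.sub_add_cancel hm]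
      push_cast
      split_ifs <;> linear_combination (k : ℤ) * hpow
  · rintro ⟨c, x⟩
    rw [Fintype.sum_prod_type]
    have hcolR' : (∑ a, (1 - R a x)) = (k : ℤ) + 1 := by
      rw [Finset.sum_sub_distrib, hRcol, Finset.sum_const, Finset.card_univ, Fintype.card_fin]
      push_cast; ring
    have hrow : ∀ i, (∑ a, calR (2 * k + 1) N W R (i, a) (c, x))
        = (W i c * W i c) * ((k:ℤ) + 1) := by
      intro i
      rw [Finset.sum_congr rfl fun a _ => hcal i a c x]
      rw [Finset.sum_add_distrib, ← Finset.mul_sum, ← Finset.mul_sum, hRcol, hcolR']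
      have := hpp i i c
      rcases hW i c with h | h | h <;> norm_num [posPart_apply, negPart_apply, h]
    rw [Finset.sum_congr rfl fun i _ => hrow i, ← Finset.sum_mul, hWcol]
    push_cast
    ring
end

section
/- Let p ≥ 3 be an odd natural number, m ≥ 1, and let N and a be natural numbers with (p - 1) * N = p^(m+1) - 1 and (p - 1) * a = p^m - 1. Let D be a p × 2p matrix with entries in {0, 1} such that D * Dᵀ = ((p+1)/2) • I_p + ((p-3)/2) • J_p. Let O : Fin (p^(m+1)) → Fin N → Fin p be an array such that any two distinct rows of O agree in exactly a columns. Define the p^(m+1) × (N * 2p) integer matrix 𝒟 (columns indexed by Fin N × Fin (2p)) by 𝒟 i (s, t) = D (O i s) t. Then 𝒟 * 𝒟ᵀ = (p^m * (p+1) / 2) • I + (p^m * (p-1) / 2 - 1) • J, where I and J are the identity and all-ones matrices of order p^(m+1). -/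
open Matrix Finset

/-!
Entry `(i, j)` of `𝒟 𝒟ᵀ` is `∑ₛ (D Dᵀ) (O i s) (O j s)`. Since `D Dᵀ = c I + d J`, this is
`N d + c · #{s | O i s = O j s}`, i.e. `N (c + d)` on the diagonal and `N d + a c` off it.
Writing `p = 2c - 1`, the two relations `(p - 1) N = p^(m+1) - 1` and `(p - 1) a = p^m - 1`
turn both into the claimed values.
-/

namespace Matrix

variable {ι σ α β R : Type*}

def substituteRows (D : Matrix α β R) (O : ι → σ → α) : Matrix ι (σ × β) R :=
  of fun i s => D (O i s.1) s.2

variable [Fintype σ] [Fintype β]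

theorem substituteRows_mul_transpose_apply [NonUnitalNonAssocSemiring R]
    (D : Matrix α β R) (O : ι → σ → α) (i j : ι) :
    (substituteRows D O * (substituteRows D O)ᵀ) i j = ∑ s, (D * Dᵀ) (O i s) (O j s) := by
  simp only [mul_apply, substituteRows, of_apply, transpose_apply, Fintype.sum_prod_type]

theorem substituteRows_mul_transpose_apply_of_mul_transpose_eq [DecidableEq α]
    [NonAssocSemiring R] {D : Matrix α β R} {c d : R}
    (hD : D * Dᵀ = c • 1 + d • of fun _ _ => 1) (O : ι → σ → α) (i j : ι) :
    (substituteRows D O * (substituteRows D O)ᵀ) i j =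
      #{s | O i s = O j s} • c + Fintype.card σ • d := by
  simp only [substituteRows_mul_transpose_apply, hD, add_apply, smul_apply, one_apply, of_apply,
    smul_eq_mul, mul_ite, mul_one, mul_zero, Finset.sum_add_distrib, Finset.sum_const,
    Finset.card_univ, Finset.sum_ite, smul_zero, add_zero]

end Matrix

theorem Nat.two_mul_cast_div_two {n : ℕ} (h : Even n) : 2 * ((n / 2 : ℕ) : ℤ) = n := by
  exact_mod_cast Nat.two_mul_div_two_of_even h

theorem stmt_8_general (p m N a : ℕ) (hp : 3 ≤ p) (hpodd : Odd p)
    (hN : (p - 1) * N = p ^ (m + 1) - 1) (ha : (p - 1) * a = p ^ m - 1)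
    (D : Matrix (Fin p) (Fin (2 * p)) ℤ)
    (hD : D * Dᵀ = (((p + 1) / 2 : ℕ) : ℤ) • 1 +
      (((p - 3) / 2 : ℕ) : ℤ) • (Matrix.of fun _ _ => (1 : ℤ)))
    (O : Fin (p ^ (m + 1)) → Fin N → Fin p)
    (hO : ∀ i j : Fin (p ^ (m + 1)), i ≠ j → {s : Fin N | O i s = O j s}.ncard = a) :
    (Matrix.of fun (i : Fin (p ^ (m + 1))) (s : Fin N × Fin (2 * p)) => D (O i s.1) s.2) *
      (Matrix.of fun (i : Fin (p ^ (m + 1))) (s : Fin N × Fin (2 * p)) => D (O i s.1) s.2)ᵀ =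
      ((p ^ m * (p + 1) / 2 : ℕ) : ℤ) • 1 +
        (((p ^ m * (p - 1) / 2 : ℕ) : ℤ) - 1) • (Matrix.of fun _ _ => (1 : ℤ)) := by
  have hc := Nat.two_mul_cast_div_two hpodd.add_one
  have hd := Nat.two_mul_cast_div_two (Nat.Odd.sub_odd hpodd (by decide : Odd 3))
  have hc' := Nat.two_mul_cast_div_two (hpodd.add_one.mul_left (p ^ m))
  have hd' := Nat.two_mul_cast_div_two ((Nat.Odd.sub_odd hpodd odd_one).mul_left (p ^ m))
  have hp1 : 1 ≤ p := by omega
  simp only [Nat.cast_add, Nat.cast_mul, Nat.cast_pow, Nat.cast_sub hp, Nat.cast_sub hp1,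
    Nat.cast_one, Nat.cast_ofNat] at hc hd hc' hd'
  zify [Nat.one_le_pow _ _ hp1, Nat.one_le_pow _ _ hp1, hp1] at hN ha
  have h2p : (2 * ((p : ℤ) - 1)) ≠ 0 := by omega
  change substituteRows D O * (substituteRows D O)ᵀ = _
  ext i j
  rw [substituteRows_mul_transpose_apply_of_mul_transpose_eq hD]
  rcases eq_or_ne i j with rfl | hij
  · simp only [Finset.filter_true, Finset.card_univ, Fintype.card_fin,
      nsmul_eq_mul, Matrix.add_apply, Matrix.smul_apply, one_apply_eq, of_apply, smul_eq_mul, mul_one]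
    apply mul_left_cancel₀ (two_ne_zero (α := ℤ))
    linear_combination N * hc + N * hd - hc' - hd' + 2 * hN
  · have hcard : #{s | O i s = O j s} = a := by
      rw [← hO i j hij, Set.ncard_eq_toFinset_card', Set.toFinset_ofPred]
    simp only [hcard, Fintype.card_fin, nsmul_eq_mul, Matrix.add_apply, Matrix.smul_apply,
      one_apply_ne hij, of_apply, smul_eq_mul, mul_zero, mul_one, zero_add]
    apply mul_left_cancel₀ h2p
    linear_combination (p - 1 : ℤ) * a * hc + (p - 1 : ℤ) * N * hd - (p - 1 : ℤ) * hd' +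
      (p + 1 : ℤ) * ha + (p - 3 : ℤ) * hN

/-- Let `D` be the incidence matrix of the derived design
`BIBD(p, 2p, p-1, (p-1)/2, (p-3)/2)` of a symmetric `2-(2p+1, p, (p-1)/2)` design, and let
`O` be an orthogonal array on `p` symbols of dimensions `p^(m+1) × N` in which any two
distinct rows agree in exactly `a` columns, where `(p-1) * N = p^(m+1) - 1` and
`(p-1) * a = p^m - 1`.  Then the matrix `𝒟` obtained from `O` by replacing each symbol by
the corresponding row of `D` satisfies
`𝒟 * 𝒟ᵀ = (p^m (p+1)/2) • I + (p^m (p-1)/2 - 1) • J`. -/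
theorem stmt_8 (p m N a : ℕ) (hp : 3 ≤ p) (hpodd : Odd p) (hm : 1 ≤ m)
    (hN : (p - 1) * N = p ^ (m + 1) - 1) (ha : (p - 1) * a = p ^ m - 1)
    (D : Matrix (Fin p) (Fin (2 * p)) ℤ)
    (hD01 : ∀ i j, D i j = 0 ∨ D i j = 1)
    (hD : D * Dᵀ = (((p + 1) / 2 : ℕ) : ℤ) • 1 +
      (((p - 3) / 2 : ℕ) : ℤ) • (Matrix.of fun _ _ => (1 : ℤ)))
    (O : Fin (p ^ (m + 1)) → Fin N → Fin p)
    (hO : ∀ i j : Fin (p ^ (m + 1)), i ≠ j → {s : Fin N | O i s = O j s}.ncard = a) :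
    (Matrix.of fun (i : Fin (p ^ (m + 1))) (s : Fin N × Fin (2 * p)) => D (O i s.1) s.2) *
      (Matrix.of fun (i : Fin (p ^ (m + 1))) (s : Fin N × Fin (2 * p)) => D (O i s.1) s.2)ᵀ =
      ((p ^ m * (p + 1) / 2 : ℕ) : ℤ) • 1 +
        (((p ^ m * (p - 1) / 2 : ℕ) : ℤ) - 1) • (Matrix.of fun _ _ => (1 : ℤ)) :=
  stmt_8_general p m N a hp hpodd hN ha D hD O hO
end

section
/- Let p be a prime power (p = q^t with q prime, t ≥ 1) with p ≥ 3, and suppose there exists a balanced generalized weighing matrix BGW(p+1, p, p-1) over the cyclic group ℤ_(p-1). Then for every positive integer m, letting N be the natural number with (p - 1) * N = p^(m+1) - 1, there exists a balanced generalized weighing matrix BGW(N, p^m, p^(m-1) * (p-1)) over ℤ_(p-1). -/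
/-!
Let `K = 𝔽_p`, let `B` be a nondegenerate bilinear form on `V = K^(m+1)` (the dot product),
and index rows and columns by the `(p^(m+1) - 1)/(p - 1)` points of `ℙ(V)`. The entry at
`(X, Y)` is `B x y ∈ Kˣ` for the chosen representatives `x, y`, or empty when `B x y = 0`;
through `Kˣ ≅ ℤ_(p-1)` this is a matrix over `ℤ_(p-1)`.

All conditions to be counted are invariant under rescaling `y`, so a count over points is a
count over nonzero vectors divided by `p - 1`. A row `X` has its nonzero entries at the `y`
outside the hyperplane `B x · = 0`: `p^(m+1) - p^m` vectors. For distinct points `X, X'`,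
the entries in column `Y` differ by `g` exactly when `B x' y ≠ 0` and `B (x - g x') y = 0`;
since `x'` and `x - g x'` are independent, these are `p^m - p^(m-1)` vectors.
-/

open Module Projectivization
open scoped LinearAlgebra.Projectivization

def IsBalancedWeighing {ι G : Type*} [AddGroup G] (k l : ℕ) (W : ι → ι → Option G) : Prop :=
  (∀ i, {c | W i c ≠ none}.ncard = k) ∧
  ∀ i j, i ≠ j → ∀ g, {c | ∃ a b, W i c = some a ∧ W j c = some b ∧ a - b = g}.ncard = l

theorem isBGW_iff {v k lam n : ℕ} {W : Fin v → Fin v → Option (ZMod n)} :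
    IsBGW v k lam n W ↔ IsBalancedWeighing k (lam / n) W :=
  Iff.rfl

theorem IsBalancedWeighing.reindex {ι ι' G G' : Type*} [AddGroup G] [AddGroup G'] {k l : ℕ}
    {W : ι → ι → Option G} (hW : IsBalancedWeighing k l W) (e : ι' ≃ ι) (f : G ≃+ G') :
    IsBalancedWeighing k l fun i j ↦ (W (e i) (e j)).map f := by
  refine ⟨fun i ↦ ?_, fun i j hij g ↦ ?_⟩
  · rw [← hW.1 (e i), ← Set.ncard_preimage_of_injective_subset_range e.injective (by simp)]
    simp
  · rw [← hW.2 (e i) (e j) (e.injective.ne hij) (f.symm g),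
      ← Set.ncard_preimage_of_injective_subset_range e.injective (by simp)]
    congr 1
    ext c
    simp only [Set.mem_ofPred_eq, Set.mem_preimage, Option.map_eq_some_iff]
    constructor
    · rintro ⟨-, -, ⟨a, ha, rfl⟩, ⟨b, hb, rfl⟩, rfl⟩
      exact ⟨a, b, ha, hb, by simp⟩
    · rintro ⟨a, b, ha, hb, hab⟩
      exact ⟨_, _, ⟨a, ha, rfl⟩, ⟨b, hb, rfl⟩, by rw [← map_sub, hab, f.apply_symm_apply]⟩

theorem Projectivization.ncard_setOf_mk_mem {K V : Type*} [Field K] [AddCommGroup V]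
    [Module K V] (S : Set (ℙ K V)) :
    (Nat.card K - 1) * S.ncard = {v : V | ∃ h : v ≠ 0, mk K v h ∈ S}.ncard := by
  have hS : {v : V | ∃ h : v ≠ 0, mk K v h ∈ S}
      = Subtype.val '' (nonZeroEquivProjectivizationProdUnits K V ⁻¹' (Prod.fst ⁻¹' S)) := by
    ext v
    simp only [Set.mem_image, Set.mem_preimage, Subtype.exists, exists_and_right, exists_eq_right]
    rfl
  rw [hS, Set.ncard_image_of_injective _ Subtype.val_injective,
    Set.ncard_preimage_of_injective_subset_range (Equiv.injective _) (by simp),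
    ← Set.prod_univ, Set.ncard_prod, Set.ncard_univ, Nat.card_units, mul_comm]

namespace LinearMap.BilinForm

variable {K V : Type*} [Field K] [AddCommGroup V] [Module K V] [FiniteDimensional K V]
  {B : LinearMap.BilinForm K V}

theorem ncard_setOf_forall_apply_eq_zero (hB : B.Nondegenerate) {ι : Type*} [Fintype ι]
    {v : ι → V} (hv : LinearIndependent K v) :
    {y : V | ∀ i, B (v i) y = 0}.ncard = Nat.card K ^ (finrank K V - Fintype.card ι) := by
  have horth : {y : V | ∀ i, B (v i) y = 0} = B.orthogonal (Submodule.span K (Set.range v)) := by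
    ext y
    change _ ↔ Submodule.span K (Set.range v) ≤ LinearMap.ker (B.flip y)
    rw [Submodule.span_le, Set.range_subset_iff]
    rfl
  rw [horth, ← Nat.card_coe_set_eq, SetLike.coe_sort_coe, Module.natCard_eq_pow_finrank (K := K),
    finrank_orthogonal hB, finrank_span_eq_card hv]

variable [Finite K]

theorem ncard_setOf_apply_ne_zero_and_forall_apply_eq_zero (hB : B.Nondegenerate) {r : ℕ}
    {x : V} {v : Fin r → V} (hxv : LinearIndependent K (Fin.cons x v : Fin (r + 1) → V)) :
    {y : V | B x y ≠ 0 ∧ ∀ i, B (v i) y = 0}.ncard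
      = (Nat.card K - 1) * Nat.card K ^ (finrank K V - (r + 1)) := by
  have : Finite V := Module.finite_of_finite K
  have hr : r + 1 ≤ finrank K V := by simpa using hxv.fintype_card_le_finrank
  have hsplit : {y : V | B x y ≠ 0 ∧ ∀ i, B (v i) y = 0}
      = {y | ∀ i, B (v i) y = 0} \ {y | ∀ i, B ((Fin.cons x v : Fin (r + 1) → V) i) y = 0} := by
    ext y
    simp only [Set.mem_ofPred_eq, Set.mem_sdiff, Fin.forall_fin_succ, Fin.cons_zero, Fin.cons_succ]
    tauto
  rw [hsplit, Set.ncard_sdiff (fun y hy i ↦ by simpa using hy i.succ),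
    ncard_setOf_forall_apply_eq_zero hB (linearIndependent_finCons.1 hxv).1,
    ncard_setOf_forall_apply_eq_zero hB hxv, Fintype.card_fin, Fintype.card_fin,
    show finrank K V - r = finrank K V - (r + 1) + 1 by omega, pow_succ, ← Nat.mul_sub_one,
    mul_comm]

theorem ncard_setOf_apply_rep_ne_zero_and_forall_apply_rep_eq_zero (hB : B.Nondegenerate)
    {r : ℕ} {x : V} {v : Fin r → V} (hxv : LinearIndependent K (Fin.cons x v : Fin (r + 1) → V)) :
    {X : ℙ K V | B x X.rep ≠ 0 ∧ ∀ i, B (v i) X.rep = 0}.ncard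
      = Nat.card K ^ (finrank K V - (r + 1)) := by
  have hK : 0 < Nat.card K - 1 := Nat.sub_pos_of_lt Finite.one_lt_card
  refine Nat.eq_of_mul_eq_mul_left hK ?_
  rw [ncard_setOf_mk_mem, ← ncard_setOf_apply_ne_zero_and_forall_apply_eq_zero hB hxv]
  congr 1
  ext y
  have hscale : ∀ c : Kˣ, (B x (c • y) ≠ 0 ∧ ∀ i, B (v i) (c • y) = 0) ↔
      (B x y ≠ 0 ∧ ∀ i, B (v i) y = 0) := fun c ↦ by
    simp [Units.smul_def, c.ne_zero]
  simp only [Set.mem_ofPred_eq]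
  constructor
  · rintro ⟨hy, h⟩
    obtain ⟨c, hc⟩ := exists_smul_eq_mk_rep K y hy
    rwa [← hc, hscale] at h
  · rintro h
    have hy : y ≠ 0 := by rintro rfl; simp at h
    obtain ⟨c, hc⟩ := exists_smul_eq_mk_rep K y hy
    exact ⟨hy, by rwa [← hc, hscale]⟩

end LinearMap.BilinForm

section ProjectiveWeighingMatrix

variable {K V : Type*} [Field K] [AddCommGroup V] [Module K V]

/-- Entries live in `Additive Kˣ`, so that the difference of two entries is their quotient
in `Kˣ`. -/
noncomputable def projectiveWeighingMatrix (B : LinearMap.BilinForm K V) (X Y : ℙ K V) :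
    Option (Additive Kˣ) :=
  open Classical in
  if h : B X.rep Y.rep = 0 then none else some (.ofMul (Units.mk0 _ h))

variable (B : LinearMap.BilinForm K V)

theorem projectiveWeighingMatrix_ne_none_iff (X Y : ℙ K V) :
    projectiveWeighingMatrix B X Y ≠ none ↔ B X.rep Y.rep ≠ 0 := by
  unfold projectiveWeighingMatrix
  split_ifs with h <;> simp [h]

theorem exists_projectiveWeighingMatrix_eq_some_and_sub_eq_iff (X X' Y : ℙ K V)
    (g : Additive Kˣ) :
    (∃ a b, projectiveWeighingMatrix B X Y = some a ∧ projectiveWeighingMatrix B X' Y = some b ∧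
        a - b = g) ↔
      B X'.rep Y.rep ≠ 0 ∧ B (X.rep - (g.toMul : K) • X'.rep) Y.rep = 0 := by
  unfold projectiveWeighingMatrix
  by_cases h' : B X'.rep Y.rep = 0
  · simp [h']
  by_cases h : B X.rep Y.rep = 0
  · simp [h, h', g.toMul.ne_zero]
  rw [dif_neg h, dif_neg h']
  simp only [Option.some_inj, exists_and_left, exists_eq_left', ne_eq, h', not_false_eq_true,
    true_and]
  simp only [← Additive.toMul.injective.eq_iff, toMul_sub, toMul_ofMul, Units.ext_iff,
    Units.val_div_eq_div_val, Units.val_mk0, div_eq_iff h', map_sub, map_smul,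
    LinearMap.sub_apply, LinearMap.smul_apply, smul_eq_mul, sub_eq_zero]

theorem isBalancedWeighing_projectiveWeighingMatrix [Finite K] [FiniteDimensional K V]
    (hB : B.Nondegenerate) :
    IsBalancedWeighing (Nat.card K ^ (finrank K V - 1)) (Nat.card K ^ (finrank K V - 2))
      (projectiveWeighingMatrix B) := by
  refine ⟨fun X ↦ ?_, fun X X' hXX' g ↦ ?_⟩
  · simp_rw [projectiveWeighingMatrix_ne_none_iff]
    simpa using B.ncard_setOf_apply_rep_ne_zero_and_forall_apply_rep_eq_zero hB (v := ![])
      (x := X.rep) (by simpa using X.rep_nonzero)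
  · simp_rw [exists_projectiveWeighingMatrix_eq_some_and_sub_eq_iff]
    have hind : LinearIndependent K ![X'.rep, X.rep - (g.toMul : K) • X'.rep] := by
      rw [sub_eq_neg_add, ← neg_smul, LinearIndependent.pair_add_smul_right_iff]
      exact linearIndependent_pair_iff_ne.2 hXX'.symm
    simpa using B.ncard_setOf_apply_rep_ne_zero_and_forall_apply_rep_eq_zero hB hind

end ProjectiveWeighingMatrix

theorem stmt_9_general (q t p : ℕ) (hq : q.Prime) (ht : 1 ≤ t) (hp : p = q ^ t)
    (m : ℕ) (N : ℕ) (hN : (p - 1) * N = p ^ (m + 1) - 1) :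
    ∃ W' : Fin N → Fin N → Option (ZMod (p - 1)),
      IsBGW N (p ^ m) (p ^ (m - 1) * (p - 1)) (p - 1) W' := by
  have : Fact q.Prime := ⟨hq⟩
  let K := GaloisField q t
  let B := Matrix.toBilin' (1 : Matrix (Fin (m + 1)) (Fin (m + 1)) K)
  have hB : B.Nondegenerate := (Matrix.nondegenerate_of_det_ne_zero (by simp)).toBilin'
  have hK : Nat.card K = p := by rw [GaloisField.card q t (by omega), hp]
  have hp1 : 0 < p - 1 := hK ▸ Nat.sub_pos_of_lt Finite.one_lt_card
  have hcard : Nat.card (ℙ K (Fin (m + 1) → K)) = N := by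
    have := Projectivization.card K (Fin (m + 1) → K)
    rw [Nat.card_fun, Nat.card_eq_fintype_card (α := Fin _), Fintype.card_fin, hK, ← hN] at this
    exact (Nat.eq_of_mul_eq_mul_left hp1 (this.trans (mul_comm _ _))).symm
  let e := (Finite.equivFinOfCardEq hcard).symm
  let f : Additive Kˣ ≃+ ZMod (p - 1) :=
    addEquivOfAddCyclicCardEq (by rw [Nat.card_zmod, ← hK]; exact Nat.card_units K)
  have hW := (isBalancedWeighing_projectiveWeighingMatrix B hB).reindex e f
  rw [hK, Module.finrank_fin_fun, Nat.add_sub_cancel, show m + 1 - 2 = m - 1 by omega,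
    ← Nat.mul_div_cancel (p ^ (m - 1)) hp1] at hW
  exact ⟨_, isBGW_iff.2 hW⟩

/-- For a prime power `p ≥ 3`, a seed `BGW(p+1, p, p-1)` over `ℤ_(p-1)` yields a balanced
generalized weighing matrix with classical parameters
`BGW((p^(m+1)-1)/(p-1), p^m, p^(m-1)(p-1))` over `ℤ_(p-1)`, for every positive `m`. -/
theorem stmt_9 (q t p : ℕ) (hq : q.Prime) (ht : 1 ≤ t) (hp : p = q ^ t) (hp3 : 3 ≤ p)
    (hseed : ∃ W : Fin (p + 1) → Fin (p + 1) → Option (ZMod (p - 1)),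
      IsBGW (p + 1) p (p - 1) (p - 1) W)
    (m : ℕ) (hm : 1 ≤ m) (N : ℕ) (hN : (p - 1) * N = p ^ (m + 1) - 1) :
    ∃ W' : Fin N → Fin N → Option (ZMod (p - 1)),
      IsBGW N (p ^ m) (p ^ (m - 1) * (p - 1)) (p - 1) W' :=
  stmt_9_general q t p hq ht hp m N hN
end

section
/- Let v, k, n, μ be natural numbers with n ≥ 1 and set λ = n * μ. Let B : ZMod n → Matrix (Fin v) (Fin v) ℤ be a family of (0,1)-matrices that are disjoint (for every cell (x, y) there is at most one g with (B g) x y = 1). Suppose (1) Σ_g (B g) * (B g)ᵀ = k • I + μ • (J - I) and (2) for every h ≠ 0 in ZMod n, Σ_g (B g) * (B (g - h))ᵀ = μ • (J - I), where I and J are the identity and all-ones matrices of order v. Define W : Fin v → Fin v → Option (ZMod n) by W x y = some g if (B g) x y = 1 (and W x y = none if no such g exists). Then W is a balanced generalized weighing matrix BGW(v, k, λ) over ℤ_n: every row of W has exactly k entries different from none, and for every pair of distinct rows i, j and every g ∈ ZMod n, the number of columns c with W i c = some a, W j c = some b and a - b = g equals μ. -/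
/-!
The hypotheses force `B g x y = [W x y = some g]`, so the `(i, j)` entry of
`Σ_g B g * (B (g - h))ᵀ` counts the columns `c` with `W i c - W j c = h`. Reading the two
matrix identities entrywise then gives the row weight `k` on the diagonal (`h = 0`, `i = j`)
and the count `μ` off the diagonal, for `h = 0` from the first identity and for `h ≠ 0` from
the second.
-/

open Matrix

section IndicatorMatrix

variable {ι κ G : Type*} [DecidableEq G]

def indicatorMatrix (W : ι → κ → Option G) (g : G) : Matrix ι κ ℤ :=
  Matrix.of fun x y => if W x y = some g then 1 else 0

theorem eq_indicatorMatrix_of_zero_one {B : G → Matrix ι κ ℤ} {W : ι → κ → Option G}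
    (hB01 : ∀ g x y, B g x y = 0 ∨ B g x y = 1)
    (hW : ∀ x y g, W x y = some g ↔ B g x y = 1) :
    B = indicatorMatrix W := by
  funext g; ext x y
  rcases hB01 g x y with h | h <;> simp [indicatorMatrix, hW, h]

variable [AddCommGroup G] [Fintype G]

lemma sum_ite_some_mul_ite_some_sub (x y : Option G) (h : G) :
    ∑ g : G, (if x = some g then (1 : ℤ) else 0) * (if y = some (g - h) then 1 else 0) =
      if ∃ a b : G, x = some a ∧ y = some b ∧ a - b = h then 1 else 0 := by
  rcases x with _ | a
  · simp
  · have key : (∃ b, y = some b ∧ a - b = h) ↔ y = some (a - h) :=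
      ⟨fun ⟨b, hb, hab⟩ => by rw [hb, ← hab, sub_sub_cancel],
        fun hy => ⟨a - h, hy, sub_sub_cancel a h⟩⟩
    simp only [Option.some.injEq, ite_mul, one_mul, zero_mul, Finset.sum_ite_eq,
      Finset.mem_univ, if_true]
    simp [key]

variable [Fintype κ]

theorem sum_indicatorMatrix_mul_transpose_sub_apply (W : ι → κ → Option G) (h : G) (i j : ι) :
    (∑ g : G, indicatorMatrix W g * (indicatorMatrix W (g - h))ᵀ) i j =
      {c : κ | ∃ a b : G, W i c = some a ∧ W j c = some b ∧ a - b = h}.ncard := by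
  simp only [Matrix.sum_apply, mul_apply, transpose_apply, indicatorMatrix, of_apply]
  rw [Finset.sum_comm]
  simp only [sum_ite_some_mul_ite_some_sub, Finset.sum_boole, Set.ncard_eq_toFinset_card',
    Set.toFinset_ofPred]

end IndicatorMatrix

section DesignMatrix

variable {ι : Type*} [DecidableEq ι]

lemma smul_allOnes_sub_one_apply_of_ne (m : ℤ) {i j : ι} (hij : i ≠ j) :
    (m • ((Matrix.of fun _ _ => (1 : ℤ)) - 1) : Matrix ι ι ℤ) i j = m := by
  simp [one_apply_ne hij]

lemma smul_one_add_smul_allOnes_sub_one_apply_self (k m : ℤ) (i : ι) :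
    (k • 1 + m • ((Matrix.of fun _ _ => (1 : ℤ)) - 1) : Matrix ι ι ℤ) i i = k := by
  simp [smul_one_eq_diagonal]

lemma smul_one_add_smul_allOnes_sub_one_apply_of_ne (k m : ℤ) {i j : ι} (hij : i ≠ j) :
    (k • 1 + m • ((Matrix.of fun _ _ => (1 : ℤ)) - 1) : Matrix ι ι ℤ) i j = m := by
  simp [smul_one_eq_diagonal, one_apply_ne hij, diagonal_apply_ne _ hij]

end DesignMatrix

theorem stmt_11_general (v k n μ : ℕ) [NeZero n]
    (B : ZMod n → Matrix (Fin v) (Fin v) ℤ)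
    (hB01 : ∀ g i j, B g i j = 0 ∨ B g i j = 1)
    (h1 : ∑ g : ZMod n, B g * (B g)ᵀ =
      (k : ℤ) • 1 + (μ : ℤ) • ((Matrix.of fun _ _ => (1 : ℤ)) - 1))
    (h2 : ∀ h : ZMod n, h ≠ 0 → ∑ g : ZMod n, B g * (B (g - h))ᵀ =
      (μ : ℤ) • ((Matrix.of fun _ _ => (1 : ℤ)) - 1))
    (W : Fin v → Fin v → Option (ZMod n))
    (hWdef : ∀ x y (g : ZMod n), W x y = some g ↔ B g x y = 1) :
    (∀ i, {c : Fin v | W i c ≠ none}.ncard = k) ∧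
    ∀ i j : Fin v, i ≠ j → ∀ g : ZMod n,
      {c : Fin v | ∃ a b : ZMod n, W i c = some a ∧ W j c = some b ∧ a - b = g}.ncard = μ := by
  obtain rfl := eq_indicatorMatrix_of_zero_one hB01 hWdef
  refine ⟨fun i => ?_, fun i j hij g => ?_⟩
  · have hrow :
        {c | ∃ a b, W i c = some a ∧ W i c = some b ∧ a - b = 0} = {c | W i c ≠ none} := by
      ext c
      rcases hc : W i c with _ | a <;> simp [hc]
    have hdiag := sum_indicatorMatrix_mul_transpose_sub_apply W 0 i i
    rw [hrow] at hdiag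
    simp only [sub_zero, h1, smul_one_add_smul_allOnes_sub_one_apply_self] at hdiag
    exact_mod_cast hdiag.symm
  · have hoff := sum_indicatorMatrix_mul_transpose_sub_apply W g i j
    rcases eq_or_ne g 0 with rfl | hg
    · simp only [sub_zero] at hoff
      rw [h1, smul_one_add_smul_allOnes_sub_one_apply_of_ne _ _ hij] at hoff
      exact_mod_cast hoff.symm
    · rw [h2 g hg, smul_allOnes_sub_one_apply_of_ne _ hij] at hoff
      exact_mod_cast hoff.symm

/-- Disjoint `(0,1)`-matrices `B g` (`g ∈ ZMod n`) satisfying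
`Σ_g (B g)(B g)ᵀ = k • I + μ • (J - I)` and, for `h ≠ 0`,
`Σ_g (B g)(B (g-h))ᵀ = μ • (J - I)`, give rise to a balanced generalized weighing matrix
`BGW(v, k, nμ)` over `ℤ_n` via `W x y = some g` iff `(B g) x y = 1`. -/
theorem stmt_11 (v k n μ : ℕ) [NeZero n]
    (B : ZMod n → Matrix (Fin v) (Fin v) ℤ)
    (hB01 : ∀ g i j, B g i j = 0 ∨ B g i j = 1)
    (hdisj : ∀ i j (g g' : ZMod n), B g i j = 1 → B g' i j = 1 → g = g')
    (h1 : ∑ g : ZMod n, B g * (B g)ᵀ =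
      (k : ℤ) • 1 + (μ : ℤ) • ((Matrix.of fun _ _ => (1 : ℤ)) - 1))
    (h2 : ∀ h : ZMod n, h ≠ 0 → ∑ g : ZMod n, B g * (B (g - h))ᵀ =
      (μ : ℤ) • ((Matrix.of fun _ _ => (1 : ℤ)) - 1))
    (W : Fin v → Fin v → Option (ZMod n))
    (hWdef : ∀ x y (g : ZMod n), W x y = some g ↔ B g x y = 1) :
    (∀ i, {c : Fin v | W i c ≠ none}.ncard = k) ∧
    ∀ i j : Fin v, i ≠ j → ∀ g : ZMod n,
      {c : Fin v | ∃ a b : ZMod n, W i c = some a ∧ W j c = some b ∧ a - b = g}.ncard = μ :=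
  stmt_11_general v k n μ B hB01 h1 h2 W hWdef
end

section
/- With the scheme setup below (disjoint (0,1)-matrices B g, g ∈ ZMod n, satisfying equations (1) and (2), and the 2n + 2 block matrices A₀ᵢ (i ∈ ZMod n), A₁, A₂ᵢ (i ∈ ZMod n), A₃ of order 2nv), the following hold: (i) A₀₀ is the identity matrix; (ii) Σ_{i} A₀ᵢ + A₁ + Σ_{i} A₂ᵢ + A₃ equals the all-ones matrix of order 2nv; (iii) the family is closed under transposition: (A₀ᵢ)ᵀ = A₀₋ᵢ, (A₁)ᵀ = A₁, (A₂ᵢ)ᵀ = A₂₋ᵢ, (A₃)ᵀ = A₃; (iv) any two of these 2n + 2 matrices commute; (v) the ℤ-submodule of Matrix (Fin (2nv)) (Fin (2nv)) ℤ spanned by {A₀ᵢ, A₁, A₂ᵢ, A₃ : i ∈ ZMod n} is closed under matrix multiplication. Hence these matrices form a commutative association scheme (with A₃ = 0 in case k = v). -/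
open Matrix Kronecker

/-- The all-ones matrix. -/
def Jmat (m : Type*) : Matrix m m ℤ := Matrix.of fun _ _ => 1

/-- The cyclic permutation matrix `P` of order `n`, with `P a b = 1` iff `b = a + 1`. -/
def Pmat (n : ℕ) : Matrix (ZMod n) (ZMod n) ℤ := Matrix.of fun a b => if b = a + 1 then 1 else 0

/-- The power `P^i` for `i ∈ ZMod n` (well defined since `Pⁿ = I`). -/
def Ppow (n : ℕ) [NeZero n] (i : ZMod n) : Matrix (ZMod n) (ZMod n) ℤ := Pmat n ^ i.val

/-- The adjacency matrices `A₀ᵢ = blockDiagonal (Pⁱ ⊗ I_v, Pⁱ ⊗ I_v)`. -/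
def A0 (n v : ℕ) [NeZero n] (i : ZMod n) :
    Matrix ((ZMod n × Fin v) ⊕ (ZMod n × Fin v)) ((ZMod n × Fin v) ⊕ (ZMod n × Fin v)) ℤ :=
  Matrix.fromBlocks (Ppow n i ⊗ₖ 1) 0 0 (Ppow n i ⊗ₖ 1)

/-- The adjacency matrix `A₁ = blockDiagonal (J_n ⊗ (J_v - I_v), J_n ⊗ (J_v - I_v))`. -/
def A1 (n v : ℕ) :
    Matrix ((ZMod n × Fin v) ⊕ (ZMod n × Fin v)) ((ZMod n × Fin v) ⊕ (ZMod n × Fin v)) ℤ :=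
  Matrix.fromBlocks (Jmat (ZMod n) ⊗ₖ (Jmat (Fin v) - 1)) 0 0
    (Jmat (ZMod n) ⊗ₖ (Jmat (Fin v) - 1))

/-- The adjacency matrices `A₂ᵢ`, with zero diagonal blocks, upper-right block
`Σ_j Pʲ ⊗ B(i+j)` and lower-left block `Σ_j Pʲ ⊗ (B(-i-j))ᵀ`. -/
def A2 (n v : ℕ) [NeZero n] (B : ZMod n → Matrix (Fin v) (Fin v) ℤ) (i : ZMod n) :
    Matrix ((ZMod n × Fin v) ⊕ (ZMod n × Fin v)) ((ZMod n × Fin v) ⊕ (ZMod n × Fin v)) ℤ :=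
  Matrix.fromBlocks 0 (∑ j : ZMod n, Ppow n j ⊗ₖ B (i + j))
    (∑ j : ZMod n, Ppow n j ⊗ₖ (B (-i - j))ᵀ) 0

/-- The adjacency matrix `A₃`, with zero diagonal blocks, upper-right block
`J_n ⊗ (J_v - Σ_j B j)` and lower-left block `J_n ⊗ (J_v - Σ_j (B j)ᵀ)`. -/
def A3 (n v : ℕ) [NeZero n] (B : ZMod n → Matrix (Fin v) (Fin v) ℤ) :
    Matrix ((ZMod n × Fin v) ⊕ (ZMod n × Fin v)) ((ZMod n × Fin v) ⊕ (ZMod n × Fin v)) ℤ :=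
  Matrix.fromBlocks 0 (Jmat (ZMod n) ⊗ₖ (Jmat (Fin v) - ∑ j : ZMod n, B j))
    (Jmat (ZMod n) ⊗ₖ (Jmat (Fin v) - ∑ j : ZMod n, (B j)ᵀ)) 0

/-- The family of the `2n + 2` adjacency matrices `A₀ᵢ, A₁, A₂ᵢ, A₃`. -/
def Fam (n v : ℕ) [NeZero n] (B : ZMod n → Matrix (Fin v) (Fin v) ℤ) :
    Set (Matrix ((ZMod n × Fin v) ⊕ (ZMod n × Fin v)) ((ZMod n × Fin v) ⊕ (ZMod n × Fin v)) ℤ) :=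
  {A1 n v, A3 n v B} ∪ Set.range (A0 n v) ∪ Set.range (A2 n v B)

/-!
Each block of each adjacency matrix is a block circulant `Σ_j Pʲ ⊗ C j`, whose entry at
`((a, x), (b, y))` is `C (b - a) x y`. Block circulants multiply by convolving their
coefficients, so every product of two adjacency matrices reduces to an identity between
`v × v` matrices. Those identities follow from (1), (2) and the fact that `W = Σ_g B g` has all
row and column sums `k` (the diagonal of (1) counts the ones in a row, the `B g` being
`0`/`1`-matrices). Products in the reverse order follow by transposition, and the resulting
product table is symmetric and lands in the span of the family.
-/

lemma sum_comp_add_left {G M : Type*} [AddCommGroup G] [Fintype G] [AddCommMonoid M]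
    (f : G → M) (a : G) : ∑ x, f (a + x) = ∑ x, f x :=
  Equiv.sum_comp (Equiv.addLeft a) f

lemma sum_comp_sub_left {G M : Type*} [AddCommGroup G] [Fintype G] [AddCommMonoid M]
    (f : G → M) (a : G) : ∑ x, f (a - x) = ∑ x, f x :=
  Equiv.sum_comp (Equiv.subLeft a) f

lemma sum_mul_sum_eq_sum_sum_sub {G A : Type*} [AddCommGroup G] [Fintype G]
    [NonUnitalNonAssocSemiring A] (X Y : G → A) :
    (∑ g, X g) * ∑ g, Y g = ∑ h, ∑ g, X g * Y (g - h) := by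
  rw [Finset.sum_mul_sum, Finset.sum_comm (γ := G) (f := fun h g => X g * Y (g - h))]
  exact Finset.sum_congr rfl fun g _ => (sum_comp_sub_left (fun g' => X g * Y g') g).symm

lemma sum_mul_sum_eq_sum_sub_sum {G A : Type*} [AddCommGroup G] [Fintype G]
    [NonUnitalNonAssocSemiring A] (X Y : G → A) :
    (∑ g, X g) * ∑ g, Y g = ∑ h, ∑ g, X (g - h) * Y g := by
  rw [Finset.sum_mul_sum, Finset.sum_comm,
    Finset.sum_comm (γ := G) (f := fun h g => X (g - h) * Y g)]
  exact Finset.sum_congr rfl fun g _ => (sum_comp_sub_left (fun g' => X g' * Y g) g).symm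

lemma mul_mem_span_of_forall_mul_mem_span {R A : Type*} [CommSemiring R] [Semiring A]
    [Algebra R A] {S : Set A} (hS : ∀ x ∈ S, ∀ y ∈ S, x * y ∈ Submodule.span R S)
    {x y : A} (hx : x ∈ Submodule.span R S) (hy : y ∈ Submodule.span R S) :
    x * y ∈ Submodule.span R S := by
  have hle : Submodule.span R S * Submodule.span R S ≤ Submodule.span R S := by
    rw [Submodule.span_mul_span, Submodule.span_le]
    rintro _ ⟨a, ha, b, hb, rfl⟩
    exact hS a ha b hb
  exact hle (Submodule.mul_mem_mul hx hy)

lemma mul_eq_transpose_mul_transpose {ι R : Type*} [Fintype ι] [CommSemiring R]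
    (X Y : Matrix ι ι R) : X * Y = (Yᵀ * Xᵀ)ᵀ := by
  rw [transpose_mul, transpose_transpose, transpose_transpose]

lemma fromBlocks_sum {α l m n o R : Type*} [AddCommMonoid R] (s : Finset α)
    (A : α → Matrix n l R) (B : α → Matrix n m R) (C : α → Matrix o l R)
    (D : α → Matrix o m R) :
    ∑ a ∈ s, fromBlocks (A a) (B a) (C a) (D a)
      = fromBlocks (∑ a ∈ s, A a) (∑ a ∈ s, B a) (∑ a ∈ s, C a) (∑ a ∈ s, D a) := by
  ext (i | i) (j | j) <;> simp [Matrix.sum_apply]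

lemma transpose_Jmat (ι : Type*) : (Jmat ι)ᵀ = Jmat ι :=
  rfl

lemma Jmat_mul_Jmat (ι : Type*) [Fintype ι] :
    Jmat ι * Jmat ι = Fintype.card ι • Jmat ι := by
  ext
  simp [Jmat, mul_apply]

lemma Jmat_mul_transpose_of_mul_Jmat {ι : Type*} [Fintype ι] {M : Matrix ι ι ℤ} {c : ℤ}
    (h : M * Jmat ι = c • Jmat ι) : Jmat ι * Mᵀ = c • Jmat ι := by
  simpa [transpose_mul, transpose_Jmat] using congrArg transpose h

lemma transpose_mul_Jmat_of_Jmat_mul {ι : Type*} [Fintype ι] {M : Matrix ι ι ℤ} {c : ℤ}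
    (h : Jmat ι * M = c • Jmat ι) : Mᵀ * Jmat ι = c • Jmat ι := by
  simpa [transpose_mul, transpose_Jmat] using congrArg transpose h

lemma fromBlocks_Jmat (κ : Type*) :
    fromBlocks (Jmat κ) (Jmat κ) (Jmat κ) (Jmat κ) = Jmat (κ ⊕ κ) := by
  ext (p | p) (q | q) <;> rfl

section BlockCirculant

variable {G ι R : Type*} [AddCommGroup G]

def blockCirculant (C : G → Matrix ι ι R) : Matrix (G × ι) (G × ι) R :=
  Matrix.of fun p q => C (q.1 - p.1) p.2 q.2

@[simp]
lemma blockCirculant_apply (C : G → Matrix ι ι R) (p q : G × ι) :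
    blockCirculant C p q = C (q.1 - p.1) p.2 q.2 :=
  rfl

lemma blockCirculant_add [Add R] (C D : G → Matrix ι ι R) :
    blockCirculant (C + D) = blockCirculant C + blockCirculant D :=
  rfl

lemma blockCirculant_smul {S : Type*} [SMul S R] (c : S) (C : G → Matrix ι ι R) :
    blockCirculant (c • C) = c • blockCirculant C :=
  rfl

lemma blockCirculant_sum [AddCommMonoid R] {α : Type*} (s : Finset α)
    (C : α → G → Matrix ι ι R) :
    blockCirculant (∑ a ∈ s, C a) = ∑ a ∈ s, blockCirculant (C a) := by
  ext p q
  simp [Matrix.sum_apply, Finset.sum_apply]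

lemma transpose_blockCirculant (C : G → Matrix ι ι R) :
    (blockCirculant C)ᵀ = blockCirculant fun m => (C (-m))ᵀ := by
  ext p q
  simp

lemma Jmat_kronecker (M : Matrix ι ι ℤ) :
    Jmat G ⊗ₖ M = blockCirculant fun _ => M := by
  ext p q
  simp [Jmat]

lemma Jmat_prod :
    Jmat (G × ι) = blockCirculant fun _ => Jmat ι :=
  rfl

lemma sum_blockCirculant_single [Fintype G] [DecidableEq G] [AddCommMonoid R]
    (M : Matrix ι ι R) :
    ∑ i : G, blockCirculant (Pi.single i M) = blockCirculant fun _ => M := by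
  rw [← blockCirculant_sum, Finset.univ_sum_single]

lemma blockCirculant_single_zero_one [DecidableEq G] [DecidableEq ι] [Zero R] [One R] :
    blockCirculant (Pi.single (0 : G) (1 : Matrix ι ι R)) = 1 := by
  ext ⟨a, x⟩ ⟨b, y⟩
  by_cases h : a = b <;> simp [one_apply, sub_eq_zero, eq_comm, h]

variable [Fintype G] [Fintype ι]

lemma blockCirculant_mul [NonUnitalNonAssocSemiring R] (C D : G → Matrix ι ι R) :
    blockCirculant C * blockCirculant D
      = blockCirculant fun s : G => ∑ m : G, C m * D (s - m) := by
  ext p q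
  simp only [mul_apply, blockCirculant_apply, Matrix.sum_apply, Fintype.sum_prod_type]
  refine Fintype.sum_equiv (Equiv.subRight p.1) _ _ fun c => ?_
  simp only [Equiv.subRight_apply, sub_sub_sub_cancel_right]

lemma blockCirculant_const_mul [NonUnitalNonAssocSemiring R] (M : Matrix ι ι R)
    (D : G → Matrix ι ι R) :
    blockCirculant (fun _ => M) * blockCirculant D = blockCirculant fun _ => M * ∑ g, D g := by
  rw [blockCirculant_mul, Finset.mul_sum]
  congr 1
  funext s
  exact sum_comp_sub_left (fun g => M * D g) s

lemma blockCirculant_mul_const [NonUnitalNonAssocSemiring R] (C : G → Matrix ι ι R)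
    (M : Matrix ι ι R) :
    blockCirculant C * blockCirculant (fun _ => M) = blockCirculant fun _ => (∑ g, C g) * M := by
  rw [blockCirculant_mul, Finset.sum_mul]

lemma blockCirculant_const_mul_const [NonUnitalNonAssocSemiring R] (M N : Matrix ι ι R) :
    blockCirculant (fun _ : G => M) * blockCirculant (fun _ => N)
      = blockCirculant fun _ => Fintype.card G • (M * N) := by
  rw [blockCirculant_const_mul, Finset.sum_const, Finset.card_univ, mul_smul_comm]

variable [DecidableEq G] [DecidableEq ι]

lemma blockCirculant_single_one_mul [NonAssocSemiring R] (i : G) (D : G → Matrix ι ι R) :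
    blockCirculant (Pi.single i 1) * blockCirculant D = blockCirculant fun s => D (s - i) := by
  rw [blockCirculant_mul]
  congr 1
  funext s
  rw [Finset.sum_eq_single i (fun m _ hm => by rw [Pi.single_eq_of_ne hm, zero_mul])
    (by simp), Pi.single_eq_same, Matrix.one_mul]

lemma blockCirculant_mul_single_one [NonAssocSemiring R] (D : G → Matrix ι ι R) (i : G) :
    blockCirculant D * blockCirculant (Pi.single i 1) = blockCirculant fun s => D (s - i) := by
  rw [blockCirculant_mul]
  congr 1
  funext s
  rw [Finset.sum_eq_single (s - i)
    (fun m _ hm => by rw [Pi.single_eq_of_ne (by contrapose! hm; rw [← hm]; abel), mul_zero])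
    (by simp), sub_sub_cancel, Pi.single_eq_same, Matrix.mul_one]

end BlockCirculant

section Kronecker

variable {n : ℕ} [NeZero n] {ι : Type*}

lemma Pmat_pow_apply (m : ℕ) (a b : ZMod n) :
    (Pmat n ^ m) a b = if b = a + m then 1 else 0 := by
  induction m generalizing b with
  | zero => simp [one_apply, eq_comm]
  | succ m ih =>
    rw [pow_succ, mul_apply]
    simp only [ih]
    simp only [Pmat, of_apply, ite_mul, one_mul, zero_mul, Finset.sum_ite_eq',
      Finset.mem_univ, if_true, Nat.cast_succ, add_assoc]

lemma Ppow_apply (i a b : ZMod n) : Ppow n i a b = if b = a + i then 1 else 0 := by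
  rw [Ppow, Pmat_pow_apply, ZMod.natCast_zmod_val]

lemma sum_Ppow_kronecker (C : ZMod n → Matrix ι ι ℤ) :
    ∑ j, Ppow n j ⊗ₖ C j = blockCirculant C := by
  ext p q
  have hshift (c : ZMod n) : q.1 = p.1 + c ↔ c = q.1 - p.1 := by
    rw [eq_sub_iff_add_eq', eq_comm]
  simp [Matrix.sum_apply, Ppow_apply, hshift]

lemma Ppow_kronecker_one [DecidableEq ι] (i : ZMod n) :
    Ppow n i ⊗ₖ (1 : Matrix ι ι ℤ) = blockCirculant (Pi.single i 1) := by
  rw [← sum_Ppow_kronecker, Finset.sum_eq_single i (fun j _ hj => by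
    rw [Pi.single_eq_of_ne hj, kronecker_zero]) (by simp), Pi.single_eq_same]

end Kronecker

section Weighing

variable {G ι : Type*} [Fintype G] [Fintype ι] [DecidableEq ι]
  (B : G → Matrix ι ι ℤ) {k μ : ℤ}

lemma sum_mul_Jmat_eq (h01 : ∀ g x y, B g x y = 0 ∨ B g x y = 1)
    (h : ∑ g, B g * (B g)ᵀ = k • 1 + μ • (Jmat ι - 1)) :
    (∑ g, B g) * Jmat ι = k • Jmat ι := by
  have hsq (g : G) (x y : ι) : B g x y * B g x y = B g x y := by
    rcases h01 g x y with h | h <;> simp [h]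
  ext x y
  have hxx : ∑ g, ∑ c, B g x c = k := by
    simpa only [Matrix.sum_apply, mul_apply, transpose_apply, hsq, Matrix.add_apply,
      Matrix.smul_apply, Matrix.sub_apply, one_apply_eq, Jmat, of_apply, sub_self, smul_eq_mul,
      mul_one, mul_zero, add_zero] using congrFun (congrFun h x) x
  simp only [Jmat, mul_apply, Matrix.sum_apply, of_apply, mul_one, Matrix.smul_apply,
    smul_eq_mul]
  rw [Finset.sum_comm, hxx]

lemma Jmat_mul_sum_eq (h01 : ∀ g x y, B g x y = 0 ∨ B g x y = 1)
    (h : ∑ g, (B g)ᵀ * B g = k • 1 + μ • (Jmat ι - 1)) :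
    Jmat ι * ∑ g, B g = k • Jmat ι := by
  have hT := sum_mul_Jmat_eq (fun g => (B g)ᵀ) (fun g x y => h01 g y x) (μ := μ)
    (by simpa only [transpose_transpose] using h)
  simpa only [← transpose_sum, transpose_transpose] using Jmat_mul_transpose_of_mul_Jmat hT

variable [AddCommGroup G] [DecidableEq G]

lemma sum_mul_transpose_sub_eq (h1 : ∑ g, B g * (B g)ᵀ = k • 1 + μ • (Jmat ι - 1))
    (h2 : ∀ h ≠ 0, ∑ g, B g * (B (g - h))ᵀ = μ • (Jmat ι - 1)) (h : G) :
    ∑ g, B g * (B (g - h))ᵀ = μ • (Jmat ι - 1) + if h = 0 then k • 1 else 0 := by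
  split_ifs with h0
  · simpa only [h0, sub_zero, add_comm] using h1
  · rw [h2 h h0, add_zero]

lemma sum_transpose_sub_mul_eq (h1 : ∑ g, (B g)ᵀ * B g = k • 1 + μ • (Jmat ι - 1))
    (h2 : ∀ h ≠ 0, ∑ g, (B (g - h))ᵀ * B g = μ • (Jmat ι - 1)) (h : G) :
    ∑ g, (B (g - h))ᵀ * B g = μ • (Jmat ι - 1) + if h = 0 then k • 1 else 0 := by
  split_ifs with h0
  · simpa only [h0, sub_zero, add_comm] using h1
  · rw [h2 h h0, add_zero]

lemma sum_mul_transpose_sum_eq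
    (hconv : ∀ h, ∑ g, B g * (B (g - h))ᵀ
      = μ • (Jmat ι - 1) + if h = 0 then k • 1 else 0) :
    (∑ g, B g) * (∑ g, B g)ᵀ = k • 1 + (Fintype.card G * μ) • (Jmat ι - 1) := by
  rw [transpose_sum, sum_mul_sum_eq_sum_sum_sub]
  simp only [hconv, Finset.sum_add_distrib, Finset.sum_const, Finset.card_univ,
    Finset.sum_ite_eq', Finset.mem_univ, if_true]
  module

lemma transpose_sum_mul_sum_eq
    (hconv : ∀ h, ∑ g, (B (g - h))ᵀ * B g
      = μ • (Jmat ι - 1) + if h = 0 then k • 1 else 0) :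
    (∑ g, B g)ᵀ * ∑ g, B g = k • 1 + (Fintype.card G * μ) • (Jmat ι - 1) := by
  rw [transpose_sum, sum_mul_sum_eq_sum_sub_sum]
  simp only [hconv, Finset.sum_add_distrib, Finset.sum_const, Finset.card_univ,
    Finset.sum_ite_eq', Finset.mem_univ, if_true]
  module

end Weighing

section Scheme

variable {n v : ℕ}

lemma A1_eq_fromBlocks :
    A1 n v = fromBlocks (blockCirculant fun _ => Jmat (Fin v) - 1) 0 0
      (blockCirculant fun _ => Jmat (Fin v) - 1) := by
  rw [A1, Jmat_kronecker]

lemma transpose_A1 : (A1 n v)ᵀ = A1 n v := by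
  simp [A1_eq_fromBlocks, fromBlocks_transpose, transpose_blockCirculant, transpose_Jmat]

variable [NeZero n] (B : ZMod n → Matrix (Fin v) (Fin v) ℤ)

lemma A0_eq_fromBlocks (i : ZMod n) :
    A0 n v i = fromBlocks (blockCirculant (Pi.single i 1)) 0 0
      (blockCirculant (Pi.single i 1)) := by
  rw [A0, Ppow_kronecker_one]

lemma A2_eq_fromBlocks (i : ZMod n) :
    A2 n v B i = fromBlocks 0 (blockCirculant fun j => B (i + j))
      (blockCirculant fun j => (B (-i - j))ᵀ) 0 := by
  rw [A2, sum_Ppow_kronecker, sum_Ppow_kronecker]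

lemma A3_eq_fromBlocks :
    A3 n v B = fromBlocks 0 (blockCirculant fun _ => Jmat (Fin v) - ∑ g, B g)
      (blockCirculant fun _ => Jmat (Fin v) - (∑ g, B g)ᵀ) 0 := by
  rw [A3, Jmat_kronecker, Jmat_kronecker, transpose_sum]

lemma sum_A0_eq_fromBlocks :
    ∑ i, A0 n v i = fromBlocks (blockCirculant fun _ => 1) 0 0 (blockCirculant fun _ => 1) := by
  simp only [A0_eq_fromBlocks, fromBlocks_sum, sum_blockCirculant_single, Finset.sum_const_zero]

lemma sum_A2_eq_fromBlocks :
    ∑ i, A2 n v B i = fromBlocks 0 (blockCirculant fun _ => ∑ g, B g)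
      (blockCirculant fun _ => (∑ g, B g)ᵀ) 0 := by
  simp only [A2_eq_fromBlocks, fromBlocks_sum, ← blockCirculant_sum, Finset.sum_const_zero,
    transpose_sum]
  congr 2 <;> funext j <;> simp only [Finset.sum_apply]
  · exact Equiv.sum_comp (Equiv.addRight j) B
  · exact Equiv.sum_comp ((Equiv.neg _).trans (Equiv.subRight j)) fun g => (B g)ᵀ

lemma A0_zero : A0 n v 0 = 1 := by
  rw [A0_eq_fromBlocks, blockCirculant_single_zero_one, fromBlocks_one]

lemma sum_A0_add_A1_add_sum_A2_add_A3 :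
    ∑ i, A0 n v i + A1 n v + ∑ i, A2 n v B i + A3 n v B = Jmat _ := by
  rw [sum_A0_eq_fromBlocks, A1_eq_fromBlocks, sum_A2_eq_fromBlocks, A3_eq_fromBlocks,
    ← fromBlocks_Jmat _, Jmat_prod]
  simp only [fromBlocks_add, ← blockCirculant_add, add_zero, zero_add]
  congr 2 <;> funext _ <;> simp only [Pi.add_apply] <;> abel

lemma transpose_A0 (i : ZMod n) : (A0 n v i)ᵀ = A0 n v (-i) := by
  rw [A0_eq_fromBlocks, A0_eq_fromBlocks, fromBlocks_transpose, transpose_blockCirculant,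
    transpose_zero]
  congr 2 <;> funext m <;> by_cases h : m = -i <;> simp [h, neg_eq_iff_eq_neg]

lemma transpose_A2 (i : ZMod n) : (A2 n v B i)ᵀ = A2 n v B (-i) := by
  rw [A2_eq_fromBlocks, A2_eq_fromBlocks, fromBlocks_transpose, transpose_blockCirculant,
    transpose_blockCirculant, transpose_zero]
  simp only [transpose_transpose, neg_neg, sub_neg_eq_add, ← sub_eq_add_neg]

lemma transpose_A3 : (A3 n v B)ᵀ = A3 n v B := by
  simp [A3_eq_fromBlocks, fromBlocks_transpose, transpose_blockCirculant, transpose_Jmat]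

lemma transpose_sum_A2 : (∑ i, A2 n v B i)ᵀ = ∑ i, A2 n v B i := by
  rw [transpose_sum]
  simp only [transpose_A2]
  exact Equiv.sum_comp (Equiv.neg _) (A2 n v B)

lemma A0_mul_A0 (i j : ZMod n) : A0 n v i * A0 n v j = A0 n v (i + j) := by
  rw [A0_eq_fromBlocks, A0_eq_fromBlocks, A0_eq_fromBlocks, fromBlocks_multiply]
  simp only [blockCirculant_mul_single_one, mul_zero, zero_mul, add_zero, zero_add]
  congr 2 <;> funext s <;> by_cases h : s = i + j <;> simp [h, sub_eq_iff_eq_add]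

lemma A0_mul_A1 (i : ZMod n) : A0 n v i * A1 n v = A1 n v := by
  rw [A0_eq_fromBlocks, A1_eq_fromBlocks, fromBlocks_multiply]
  simp only [blockCirculant_single_one_mul, mul_zero, zero_mul, add_zero, zero_add]

lemma A0_mul_A2 (i j : ZMod n) : A0 n v i * A2 n v B j = A2 n v B (j - i) := by
  rw [A0_eq_fromBlocks, A2_eq_fromBlocks, A2_eq_fromBlocks, fromBlocks_multiply]
  simp only [blockCirculant_single_one_mul, mul_zero, zero_mul, add_zero, zero_add]
  congr 2 <;> funext s <;> ring_nf

lemma A0_mul_A3 (i : ZMod n) : A0 n v i * A3 n v B = A3 n v B := by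
  rw [A0_eq_fromBlocks, A3_eq_fromBlocks, fromBlocks_multiply]
  simp only [blockCirculant_single_one_mul, mul_zero, zero_mul, add_zero, zero_add]

lemma A1_mul_A1 :
    A1 n v * A1 n v
      = ((n : ℤ) * ((v : ℤ) - 2)) • A1 n v
        + ((n : ℤ) * ((v : ℤ) - 1)) • ∑ i, A0 n v i := by
  rw [A1_eq_fromBlocks, sum_A0_eq_fromBlocks, fromBlocks_multiply]
  simp only [blockCirculant_const_mul_const, mul_zero, zero_mul, add_zero, zero_add,
    fromBlocks_smul, fromBlocks_add, smul_zero, ← blockCirculant_smul, ← blockCirculant_add]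
  congr 2 <;> funext s <;>
    simp only [Pi.add_apply, Pi.smul_apply, sub_mul, mul_sub, Jmat_mul_Jmat, mul_one, one_mul,
      Fintype.card_fin, ZMod.card] <;> module

variable {k μ : ℤ}

lemma A1_mul_A2 (hrow : (∑ g, B g) * Jmat (Fin v) = k • Jmat (Fin v))
    (hcol : Jmat (Fin v) * ∑ g, B g = k • Jmat (Fin v)) (i : ZMod n) :
    A1 n v * A2 n v B i = (k - 1) • ∑ j, A2 n v B j + k • A3 n v B := by
  rw [A1_eq_fromBlocks, A2_eq_fromBlocks, sum_A2_eq_fromBlocks, A3_eq_fromBlocks,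
    fromBlocks_multiply]
  simp only [blockCirculant_const_mul, mul_zero, zero_mul, add_zero, zero_add,
    fromBlocks_smul, fromBlocks_add, smul_zero, ← blockCirculant_smul, ← blockCirculant_add]
  congr 2 <;> funext s <;>
    simp only [Pi.add_apply, Pi.smul_apply, sub_mul, one_mul, sum_comp_add_left B i,
      sum_comp_sub_left (fun g => (B g)ᵀ) (-i), ← transpose_sum, hcol,
      Jmat_mul_transpose_of_mul_Jmat hrow] <;> module

lemma A1_mul_A3 (hrow : (∑ g, B g) * Jmat (Fin v) = k • Jmat (Fin v))
    (hcol : Jmat (Fin v) * ∑ g, B g = k • Jmat (Fin v)) :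
    A1 n v * A3 n v B = ((n : ℤ) * ((v : ℤ) - k)) • ∑ j, A2 n v B j
      + ((n : ℤ) * ((v : ℤ) - k) - n) • A3 n v B := by
  rw [A1_eq_fromBlocks, sum_A2_eq_fromBlocks, A3_eq_fromBlocks, fromBlocks_multiply]
  simp only [blockCirculant_const_mul_const, mul_zero, zero_mul, add_zero, zero_add,
    fromBlocks_smul, fromBlocks_add, smul_zero, ← blockCirculant_smul, ← blockCirculant_add]
  congr 2 <;> funext s <;>
    simp only [Pi.add_apply, Pi.smul_apply, sub_mul, mul_sub, one_mul, Jmat_mul_Jmat, hcol,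
      Jmat_mul_transpose_of_mul_Jmat hrow, Fintype.card_fin, ZMod.card] <;> module

lemma A2_mul_A2
    (hconv : ∀ h, ∑ g, B g * (B (g - h))ᵀ
      = μ • (Jmat (Fin v) - 1) + if h = 0 then k • 1 else 0)
    (hconv' : ∀ h, ∑ g, (B (g - h))ᵀ * B g
      = μ • (Jmat (Fin v) - 1) + if h = 0 then k • 1 else 0) (i j : ZMod n) :
    A2 n v B i * A2 n v B j = μ • A1 n v + k • A0 n v (-(i + j)) := by
  rw [A2_eq_fromBlocks, A2_eq_fromBlocks, A1_eq_fromBlocks, A0_eq_fromBlocks, fromBlocks_multiply]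
  simp only [blockCirculant_mul, mul_zero, zero_mul, add_zero, zero_add,
    fromBlocks_smul, fromBlocks_add, smul_zero, ← blockCirculant_smul, ← blockCirculant_add]
  congr 2 <;> funext s <;> simp only [Pi.add_apply, Pi.smul_apply]
  -- Substituting `g = i + m` (resp. `g = j + s - m`) turns the coefficient at `s` into the
  -- correlation sum (2) at `h = s + (i + j)`.
  · have hidx (m : ZMod n) : -j - (s - m) = i + m - (s + (i + j)) := by ring
    simp only [hidx]
    rw [sum_comp_add_left (fun g => B g * (B (g - (s + (i + j))))ᵀ) i, hconv]
    simp only [Pi.single_apply, eq_neg_iff_add_eq_zero, smul_ite, smul_zero]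
  · have hidx (m : ZMod n) : -i - m = j + s - m - (s + (i + j)) := by ring
    have hidx' (m : ZMod n) : j + (s - m) = j + s - m := by ring
    simp only [hidx, hidx']
    rw [sum_comp_sub_left (fun g => (B (g - (s + (i + j))))ᵀ * B g) (j + s), hconv']
    simp only [Pi.single_apply, eq_neg_iff_add_eq_zero, smul_ite, smul_zero]

lemma A2_mul_A3 (hrow : (∑ g, B g) * Jmat (Fin v) = k • Jmat (Fin v))
    (hcol : Jmat (Fin v) * ∑ g, B g = k • Jmat (Fin v))
    (hBBt : (∑ g, B g) * (∑ g, B g)ᵀ = k • 1 + ((n : ℤ) * μ) • (Jmat (Fin v) - 1))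
    (hBtB : (∑ g, B g)ᵀ * ∑ g, B g = k • 1 + ((n : ℤ) * μ) • (Jmat (Fin v) - 1))
    (i : ZMod n) :
    A2 n v B i * A3 n v B = (k - n * μ) • A1 n v := by
  rw [A2_eq_fromBlocks, A3_eq_fromBlocks, A1_eq_fromBlocks, fromBlocks_multiply]
  simp only [blockCirculant_mul_const, mul_zero, zero_mul, add_zero, zero_add,
    fromBlocks_smul, smul_zero, ← blockCirculant_smul]
  congr 2 <;> funext s <;>
    simp only [Pi.smul_apply, mul_sub, sum_comp_add_left B i,
      sum_comp_sub_left (fun g => (B g)ᵀ) (-i), ← transpose_sum, hrow, hBBt, hBtB,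
      transpose_mul_Jmat_of_Jmat_mul hcol] <;> module

lemma A3_mul_A3 (hrow : (∑ g, B g) * Jmat (Fin v) = k • Jmat (Fin v))
    (hcol : Jmat (Fin v) * ∑ g, B g = k • Jmat (Fin v))
    (hBBt : (∑ g, B g) * (∑ g, B g)ᵀ = k • 1 + ((n : ℤ) * μ) • (Jmat (Fin v) - 1))
    (hBtB : (∑ g, B g)ᵀ * ∑ g, B g = k • 1 + ((n : ℤ) * μ) • (Jmat (Fin v) - 1)) :
    A3 n v B * A3 n v B = ((n : ℤ) * ((v : ℤ) - 2 * k + n * μ)) • A1 n v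
      + ((n : ℤ) * ((v : ℤ) - k)) • ∑ i, A0 n v i := by
  rw [A3_eq_fromBlocks, A1_eq_fromBlocks, sum_A0_eq_fromBlocks, fromBlocks_multiply]
  simp only [blockCirculant_const_mul_const, mul_zero, zero_mul, add_zero, zero_add,
    fromBlocks_smul, fromBlocks_add, smul_zero, ← blockCirculant_smul, ← blockCirculant_add]
  congr 2 <;> funext s <;>
    simp only [Pi.add_apply, Pi.smul_apply, sub_mul, mul_sub, Jmat_mul_Jmat, hrow, hcol, hBBt,
      hBtB, Jmat_mul_transpose_of_mul_Jmat hrow, transpose_mul_Jmat_of_Jmat_mul hcol,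
      Fintype.card_fin, ZMod.card] <;> module

lemma A1_mul_A0 (i : ZMod n) : A1 n v * A0 n v i = A1 n v := by
  rw [mul_eq_transpose_mul_transpose, transpose_A1, transpose_A0, A0_mul_A1, transpose_A1]

lemma A2_mul_A0 (i j : ZMod n) : A2 n v B j * A0 n v i = A2 n v B (j - i) := by
  rw [mul_eq_transpose_mul_transpose, transpose_A2, transpose_A0, A0_mul_A2, transpose_A2,
    neg_sub, sub_neg_eq_add, neg_add_eq_sub]

lemma A3_mul_A0 (i : ZMod n) : A3 n v B * A0 n v i = A3 n v B := by
  rw [mul_eq_transpose_mul_transpose, transpose_A3, transpose_A0, A0_mul_A3, transpose_A3]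

lemma A2_mul_A1 (hrow : (∑ g, B g) * Jmat (Fin v) = k • Jmat (Fin v))
    (hcol : Jmat (Fin v) * ∑ g, B g = k • Jmat (Fin v)) (i : ZMod n) :
    A2 n v B i * A1 n v = (k - 1) • ∑ j, A2 n v B j + k • A3 n v B := by
  rw [mul_eq_transpose_mul_transpose, transpose_A1, transpose_A2, A1_mul_A2 B hrow hcol,
    transpose_add, transpose_smul, transpose_smul, transpose_sum_A2, transpose_A3]

lemma A3_mul_A1 (hrow : (∑ g, B g) * Jmat (Fin v) = k • Jmat (Fin v))
    (hcol : Jmat (Fin v) * ∑ g, B g = k • Jmat (Fin v)) :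
    A3 n v B * A1 n v = ((n : ℤ) * ((v : ℤ) - k)) • ∑ j, A2 n v B j
      + ((n : ℤ) * ((v : ℤ) - k) - n) • A3 n v B := by
  rw [mul_eq_transpose_mul_transpose, transpose_A1, transpose_A3, A1_mul_A3 B hrow hcol,
    transpose_add, transpose_smul, transpose_smul, transpose_sum_A2, transpose_A3]

lemma A3_mul_A2 (hrow : (∑ g, B g) * Jmat (Fin v) = k • Jmat (Fin v))
    (hcol : Jmat (Fin v) * ∑ g, B g = k • Jmat (Fin v))
    (hBBt : (∑ g, B g) * (∑ g, B g)ᵀ = k • 1 + ((n : ℤ) * μ) • (Jmat (Fin v) - 1))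
    (hBtB : (∑ g, B g)ᵀ * ∑ g, B g = k • 1 + ((n : ℤ) * μ) • (Jmat (Fin v) - 1))
    (i : ZMod n) :
    A3 n v B * A2 n v B i = (k - n * μ) • A1 n v := by
  rw [mul_eq_transpose_mul_transpose, transpose_A2, transpose_A3,
    A2_mul_A3 B hrow hcol hBBt hBtB, transpose_smul, transpose_A1]

lemma mul_comm_and_mem_span_of_mem_Fam
    (hrow : (∑ g, B g) * Jmat (Fin v) = k • Jmat (Fin v))
    (hcol : Jmat (Fin v) * ∑ g, B g = k • Jmat (Fin v))
    (hconv : ∀ h, ∑ g, B g * (B (g - h))ᵀ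
      = μ • (Jmat (Fin v) - 1) + if h = 0 then k • 1 else 0)
    (hconv' : ∀ h, ∑ g, (B (g - h))ᵀ * B g
      = μ • (Jmat (Fin v) - 1) + if h = 0 then k • 1 else 0)
    {X Y : Matrix _ _ ℤ} (hX : X ∈ Fam n v B) (hY : Y ∈ Fam n v B) :
    X * Y = Y * X ∧ X * Y ∈ Submodule.span ℤ (Fam n v B) := by
  have hBBt := sum_mul_transpose_sum_eq B hconv
  have hBtB := transpose_sum_mul_sum_eq B hconv'
  rw [ZMod.card] at hBBt hBtB
  have hA0 (i : ZMod n) : A0 n v i ∈ Submodule.span ℤ (Fam n v B) :=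
    Submodule.subset_span (by simp [Fam])
  have hA1 : A1 n v ∈ Submodule.span ℤ (Fam n v B) := Submodule.subset_span (by simp [Fam])
  have hA2 (i : ZMod n) : A2 n v B i ∈ Submodule.span ℤ (Fam n v B) :=
    Submodule.subset_span (by simp [Fam])
  have hA3 : A3 n v B ∈ Submodule.span ℤ (Fam n v B) := Submodule.subset_span (by simp [Fam])
  have hsumA0 := Submodule.sum_mem _ fun i (_ : i ∈ Finset.univ) => hA0 i
  have hsumA2 := Submodule.sum_mem _ fun i (_ : i ∈ Finset.univ) => hA2 i
  rcases hX with ((rfl | rfl) | ⟨i, rfl⟩) | ⟨i, rfl⟩ <;>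
    rcases hY with ((rfl | rfl) | ⟨j, rfl⟩) | ⟨j, rfl⟩ <;>
    simp only [A0_mul_A0, A0_mul_A1, A0_mul_A2, A0_mul_A3, A1_mul_A0, A2_mul_A0, A3_mul_A0,
      A1_mul_A1, A1_mul_A2 B hrow hcol, A2_mul_A1 B hrow hcol, A1_mul_A3 B hrow hcol,
      A3_mul_A1 B hrow hcol, A2_mul_A2 B hconv hconv', A2_mul_A3 B hrow hcol hBBt hBtB,
      A3_mul_A2 B hrow hcol hBBt hBtB, A3_mul_A3 B hrow hcol hBBt hBtB, true_and]
  all_goals try refine ⟨by rw [add_comm i j], ?_⟩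
  all_goals repeat' first
    | exact hA1 | exact hA3 | exact hA0 _ | exact hA2 _ | exact hsumA0 | exact hsumA2
    | apply Submodule.add_mem | apply Submodule.smul_mem

end Scheme

theorem stmt_12_general (v k n μ : ℕ) [NeZero n]
    (B : ZMod n → Matrix (Fin v) (Fin v) ℤ)
    (hB01 : ∀ g i j, B g i j = 0 ∨ B g i j = 1)
    (h1 : ∑ g : ZMod n, B g * (B g)ᵀ = (k : ℤ) • 1 + (μ : ℤ) • (Jmat (Fin v) - 1))
    (h1' : ∑ g : ZMod n, (B g)ᵀ * B g = (k : ℤ) • 1 + (μ : ℤ) • (Jmat (Fin v) - 1))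
    (h2 : ∀ h : ZMod n, h ≠ 0 →
      ∑ g : ZMod n, B g * (B (g - h))ᵀ = (μ : ℤ) • (Jmat (Fin v) - 1))
    (h2' : ∀ h : ZMod n, h ≠ 0 →
      ∑ g : ZMod n, (B (g - h))ᵀ * B g = (μ : ℤ) • (Jmat (Fin v) - 1)) :
    (A0 n v 0 = 1) ∧
    ((∑ i : ZMod n, A0 n v i) + A1 n v + (∑ i : ZMod n, A2 n v B i) + A3 n v B =
      Jmat ((ZMod n × Fin v) ⊕ (ZMod n × Fin v))) ∧
    (∀ i : ZMod n, (A0 n v i)ᵀ = A0 n v (-i)) ∧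
    ((A1 n v)ᵀ = A1 n v) ∧
    (∀ i : ZMod n, (A2 n v B i)ᵀ = A2 n v B (-i)) ∧
    ((A3 n v B)ᵀ = A3 n v B) ∧
    (∀ X ∈ Fam n v B, ∀ Y ∈ Fam n v B, X * Y = Y * X) ∧
    (∀ X ∈ Submodule.span ℤ (Fam n v B), ∀ Y ∈ Submodule.span ℤ (Fam n v B),
      X * Y ∈ Submodule.span ℤ (Fam n v B)) := by
  have hFam {X Y} (hX : X ∈ Fam n v B) (hY : Y ∈ Fam n v B) :=
    mul_comm_and_mem_span_of_mem_Fam B (sum_mul_Jmat_eq B hB01 h1)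
      (Jmat_mul_sum_eq B hB01 h1') (sum_mul_transpose_sub_eq B h1 h2)
      (sum_transpose_sub_mul_eq B h1' h2') hX hY
  exact ⟨A0_zero, sum_A0_add_A1_add_sum_A2_add_A3 B, transpose_A0, transpose_A1, transpose_A2 B,
    transpose_A3 B, fun X hX Y hY => (hFam hX hY).1,
    fun X hX Y hY => mul_mem_span_of_forall_mul_mem_span (fun X hX Y hY => (hFam hX hY).2) hX hY⟩

/-- The `2n + 2` matrices `A₀ᵢ, A₁, A₂ᵢ, A₃` built from the blocks of a balanced
generalized weighing matrix over `ℤ_n` form a commutative association scheme: `A₀₀` is the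
identity, the matrices sum to the all-ones matrix, the family is closed under transposition,
any two members commute, and the ℤ-span of the family is closed under multiplication. -/
theorem stmt_12 (v k n μ : ℕ) [NeZero n]
    (B : ZMod n → Matrix (Fin v) (Fin v) ℤ)
    (hB01 : ∀ g i j, B g i j = 0 ∨ B g i j = 1)
    (hdisj : ∀ i j (g g' : ZMod n), B g i j = 1 → B g' i j = 1 → g = g')
    (h1 : ∑ g : ZMod n, B g * (B g)ᵀ = (k : ℤ) • 1 + (μ : ℤ) • (Jmat (Fin v) - 1))
    (h1' : ∑ g : ZMod n, (B g)ᵀ * B g = (k : ℤ) • 1 + (μ : ℤ) • (Jmat (Fin v) - 1))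
    (h2 : ∀ h : ZMod n, h ≠ 0 →
      ∑ g : ZMod n, B g * (B (g - h))ᵀ = (μ : ℤ) • (Jmat (Fin v) - 1))
    (h2' : ∀ h : ZMod n, h ≠ 0 →
      ∑ g : ZMod n, (B (g - h))ᵀ * B g = (μ : ℤ) • (Jmat (Fin v) - 1)) :
    (A0 n v 0 = 1) ∧
    ((∑ i : ZMod n, A0 n v i) + A1 n v + (∑ i : ZMod n, A2 n v B i) + A3 n v B =
      Jmat ((ZMod n × Fin v) ⊕ (ZMod n × Fin v))) ∧
    (∀ i : ZMod n, (A0 n v i)ᵀ = A0 n v (-i)) ∧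
    ((A1 n v)ᵀ = A1 n v) ∧
    (∀ i : ZMod n, (A2 n v B i)ᵀ = A2 n v B (-i)) ∧
    ((A3 n v B)ᵀ = A3 n v B) ∧
    (∀ X ∈ Fam n v B, ∀ Y ∈ Fam n v B, X * Y = Y * X) ∧
    (∀ X ∈ Submodule.span ℤ (Fam n v B), ∀ Y ∈ Submodule.span ℤ (Fam n v B),
      X * Y ∈ Submodule.span ℤ (Fam n v B)) :=
  stmt_12_general v k n μ B hB01 h1 h1' h2 h2'
end

section
/- With the scheme setup below, assume n ≥ 2 and v ≥ 1. Then all of the matrices A₀ᵢ (i ∈ ZMod n) and A₂ᵢ (i ∈ ZMod n) are symmetric (Mᵀ = M) if and only if n = 2. (Equivalently, the association scheme of the construction is symmetric if and only if n = 2.) -/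
open Matrix Kronecker

lemma Pmat_two_symm : (Pmat 2)ᵀ = Pmat 2 := by
  ext a b
  simp only [Pmat, Matrix.transpose_apply, Matrix.of_apply]
  have : (a = b + 1) ↔ (b = a + 1) := by revert a b; decide
  simp [this]

lemma Ppow_two_symm (i : ZMod 2) : (Ppow 2 i)ᵀ = Ppow 2 i := by
  rw [Ppow, Matrix.transpose_pow, Pmat_two_symm]

lemma kron_symm (v : ℕ) (i : ZMod 2) (M : Matrix (Fin v) (Fin v) ℤ) :
    (Ppow 2 i ⊗ₖ M)ᵀ = Ppow 2 i ⊗ₖ Mᵀ := by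
  rw [← Matrix.kroneckerMap_transpose, Ppow_two_symm]

theorem stmt_13' (v k n μ : ℕ) [NeZero n] (hn : 2 ≤ n) (hv : 1 ≤ v)
    (B : ZMod n → Matrix (Fin v) (Fin v) ℤ) :
    ((∀ i : ZMod n, (A0 n v i)ᵀ = A0 n v i) ∧
      (∀ i : ZMod n, (A2 n v B i)ᵀ = A2 n v B i)) ↔ n = 2 := by
  constructor
  · rintro ⟨h0, -⟩
    haveI : Fact (1 < n) := ⟨hn⟩
    have h := congrFun (congrFun (h0 1) (Sum.inl (1, ⟨0, hv⟩))) (Sum.inl (0, ⟨0, hv⟩))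
    simp only [A0, Matrix.transpose_apply, Matrix.fromBlocks_apply₁₁,
      Matrix.kroneckerMap_apply, Ppow, ZMod.val_one, pow_one, Pmat, Matrix.of_apply,
      Matrix.one_apply_eq, mul_one, zero_add, if_true] at h
    have h2 : (0 : ZMod n) = 1 + 1 := by
      by_contra hc
      rw [if_neg hc] at h
      exact one_ne_zero h
    have : ((2 : ℕ) : ZMod n) = 0 := by
      rw [Nat.cast_two, ← one_add_one_eq_two]; exact h2.symm
    have hd := (ZMod.natCast_eq_zero_iff 2 n).mp this
    exact le_antisymm (Nat.le_of_dvd (by norm_num) hd) hn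
  · intro hn2
    subst hn2
    have hneg : ∀ a b : ZMod 2, -a - b = a + b := fun a b => by
      rw [sub_eq_add_neg, CharTwo.neg_eq, CharTwo.neg_eq]
    constructor
    · intro i
      rw [A0, Matrix.fromBlocks_transpose, Matrix.transpose_zero, kron_symm,
        Matrix.transpose_one]
    · intro i
      have e1 : (∑ j : ZMod 2, Ppow 2 j ⊗ₖ (B (-i - j))ᵀ)ᵀ
          = ∑ j : ZMod 2, Ppow 2 j ⊗ₖ B (i + j) := by
        rw [Matrix.transpose_sum]
        exact Finset.sum_congr rfl fun j _ => by
          rw [kron_symm, Matrix.transpose_transpose, hneg]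
      have e2 : (∑ j : ZMod 2, Ppow 2 j ⊗ₖ B (i + j))ᵀ
          = ∑ j : ZMod 2, Ppow 2 j ⊗ₖ (B (-i - j))ᵀ := by
        rw [Matrix.transpose_sum]
        exact Finset.sum_congr rfl fun j _ => by rw [kron_symm, hneg]
      rw [A2, Matrix.fromBlocks_transpose, Matrix.transpose_zero, e1, e2]

/-- The association scheme of the construction is symmetric if and only if `n = 2`:
assuming `n ≥ 2` and `v ≥ 1`, all the matrices `A₀ᵢ` and `A₂ᵢ` are symmetric iff
`n = 2`. -/
theorem stmt_13 (v k n μ : ℕ) [NeZero n] (hn : 2 ≤ n) (hv : 1 ≤ v)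
    (B : ZMod n → Matrix (Fin v) (Fin v) ℤ)
    (hB01 : ∀ g i j, B g i j = 0 ∨ B g i j = 1)
    (hdisj : ∀ i j (g g' : ZMod n), B g i j = 1 → B g' i j = 1 → g = g')
    (h1 : ∑ g : ZMod n, B g * (B g)ᵀ = (k : ℤ) • 1 + (μ : ℤ) • (Jmat (Fin v) - 1))
    (h1' : ∑ g : ZMod n, (B g)ᵀ * B g = (k : ℤ) • 1 + (μ : ℤ) • (Jmat (Fin v) - 1))
    (h2 : ∀ h : ZMod n, h ≠ 0 →
      ∑ g : ZMod n, B g * (B (g - h))ᵀ = (μ : ℤ) • (Jmat (Fin v) - 1))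
    (h2' : ∀ h : ZMod n, h ≠ 0 →
      ∑ g : ZMod n, (B (g - h))ᵀ * B g = (μ : ℤ) • (Jmat (Fin v) - 1)) :
    ((∀ i : ZMod n, (A0 n v i)ᵀ = A0 n v i) ∧
      (∀ i : ZMod n, (A2 n v B i)ᵀ = A2 n v B i)) ↔ n = 2 := by
  exact stmt_13' v k n μ hn hv B
end
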